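/- For every n ≥ 1, the group W_n = ⟨T_n⟩ contains the copy RiSt_V(C_{(ρ_n,1)} ∪ C_{(ρ_n,2)} ∪ C_{(ρ_n,3)} ∪ C_{(ρ_n,4)}) of Thompson's group V supported on the union of the four copies of the Cantor set above ρ_n. -/

import Mathlib

noncomputable section

/-! ### Generalities: the group of self-homeomorphisms -/

instance homeoGroup {X : Type*} [TopologicalSpace X] : Group (X ≃ₜ X) where
  mul f g := g.trans f
  one := Homeomorph.refl X
  inv := Homeomorph.symm
  mul_assoc a b c := Homeomorph.ext fun _ => rfl
  one_mul a := Homeomorph.ext fun _ => rfl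
  mul_one a := Homeomorph.ext fun _ => rfl
  inv_mul_cancel a := Homeomorph.ext a.symm_apply_apply

/-! ### Homeomorphisms of a product with a discrete factor -/

theorem cont_fibered {X Y Z : Type*} [TopologicalSpace X] [TopologicalSpace Y]
    [DiscreteTopology Y] [TopologicalSpace Z] (f : X → Y → Z) (hf : ∀ y, Continuous (f · y)) :
    Continuous (fun p : X × Y => f p.1 p.2) := by
  rw [continuous_iff_continuousAt]
  rintro ⟨x, y⟩
  have hmem : {p : X × Y | p.2 = y} ∈ nhds (x, y) := by
    have ho : IsOpen {p : X × Y | p.2 = y} := by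
      have h : ({p : X × Y | p.2 = y}) = Prod.snd ⁻¹' {y} := rfl
      rw [h]; exact (isOpen_discrete _).preimage continuous_snd
    exact ho.mem_nhds rfl
  refine ContinuousAt.congr (((hf y).comp continuous_fst).continuousAt) ?_
  filter_upwards [hmem] with p hp
  simp [hp]

/-- The homeomorphism of `X × Y`, `Y` discrete, acting on each fiber `X × {y}`
by the homeomorphism `F y`. -/
def fiberedHomeo {X Y : Type*} [TopologicalSpace X] [TopologicalSpace Y] [DiscreteTopology Y]
    (F : Y → X ≃ₜ X) : (X × Y) ≃ₜ (X × Y) where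
  toEquiv := Equiv.prodCongrLeft fun y => (F y).toEquiv
  continuous_toFun := by
    refine Continuous.prodMk ?_ continuous_snd
    exact cont_fibered (fun x y => F y x) (fun y => (F y).continuous)
  continuous_invFun := by
    refine Continuous.prodMk ?_ continuous_snd
    exact cont_fibered (fun x y => (F y).symm x) (fun y => (F y).symm.continuous)

/-- The homeomorphism of `X × Y`, `Y` discrete, permuting the fibers according to a
permutation of `Y` and acting trivially in the `X`-coordinate. -/
def basePermHomeo {X Y : Type*} [TopologicalSpace X] [TopologicalSpace Y] [DiscreteTopology Y]
    (e : Equiv.Perm Y) : (X × Y) ≃ₜ (X × Y) where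
  toEquiv := Equiv.prodCongr (Equiv.refl X) e
  continuous_toFun :=
    continuous_fst.prodMk (continuous_of_discreteTopology.comp continuous_snd)
  continuous_invFun :=
    continuous_fst.prodMk (continuous_of_discreteTopology.comp continuous_snd)

/-! ### The Cantor set -/

/-- The Cantor set `{0,1}^ℕ`. -/
abbrev Cantor : Type := ℕ → Bool

/-- Prepending a finite word to an element of the Cantor set. -/
def wordAppend (w : List Bool) (ξ : Cantor) : Cantor :=
  fun n => if h : n < w.length then w[n] else ξ (n - w.length)

/-- A dyadic partition set: a finite set of binary words whose cylinders partition
the Cantor set. -/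
def IsDyadicPartition (A : Finset (List Bool)) : Prop :=
  ∀ ξ : Cantor, ∃! w : List Bool, w ∈ A ∧ ∃ ξ' : Cantor, wordAppend w ξ' = ξ

/-- The defining condition for elements of Thompson's group `V`: a homeomorphism of the
Cantor set given by prefix replacement along a bijection of two dyadic partition sets. -/
def IsThompsonVMap (γ : Cantor ≃ₜ Cantor) : Prop :=
  ∃ (A B : Finset (List Bool)) (f : List Bool → List Bool),
    IsDyadicPartition A ∧ IsDyadicPartition B ∧ A.card = B.card ∧ Set.BijOn f A B ∧
    ∀ w ∈ A, ∀ ξ : Cantor, γ (wordAppend w ξ) = wordAppend (f w) ξ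

/-- Thompson's group `V`, as a group of homeomorphisms of the Cantor set. -/
def ThompsonV : Subgroup (Cantor ≃ₜ Cantor) :=
  Subgroup.closure {γ | IsThompsonVMap γ}

theorem cantor_core_continuous (G : ℕ → Bool → Bool → Bool → Bool → Bool → Bool → Bool) :
    Continuous (fun ξ : Cantor =>
      (fun n => G n (ξ 0) (ξ 1) (ξ 2) (ξ (n - 1)) (ξ n) (ξ (n + 1)) : Cantor)) := by
  apply continuous_pi
  intro n
  have h : Continuous (fun ξ : Cantor =>
      ((ξ 0, ξ 1, ξ 2, ξ (n - 1), ξ n, ξ (n + 1)) : Bool × Bool × Bool × Bool × Bool × Bool)) :=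
    (continuous_apply 0).prodMk ((continuous_apply 1).prodMk
      ((continuous_apply 2).prodMk ((continuous_apply (n-1)).prodMk
      ((continuous_apply n).prodMk (continuous_apply (n+1))))))
  exact (continuous_of_discreteTopology
    (f := fun p : Bool × Bool × Bool × Bool × Bool × Bool =>
      G n p.1 p.2.1 p.2.2.1 p.2.2.2.1 p.2.2.2.2.1 p.2.2.2.2.2)).comp h

def consC (b : Bool) (ξ : Cantor) : Cantor := fun n => match n with
  | 0 => b
  | n+1 => ξ n

def shiftC (ξ : Cantor) : Cantor := fun n => ξ (n + 1)

theorem consC_continuous (b : Bool) : Continuous (consC b) := by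
  apply continuous_pi
  intro n
  match n with
  | 0 => exact continuous_const
  | n+1 => exact continuous_apply n

theorem shiftC_continuous : Continuous shiftC :=
  continuous_pi fun n => continuous_apply (n + 1)

/-! ### Thompson's generator `X₀` as a homeomorphism of the Cantor set -/

def x0core (n : ℕ) (b0 b1 : Bool) (w v u : Bool) : Bool :=
  if b0 = false then
    (if b1 = false then u
     else if n = 0 then true else if n = 1 then false else v)
  else (if n ≤ 1 then true else w)

def x0invcore (n : ℕ) (b0 b1 : Bool) (w v u : Bool) : Bool :=
  if b0 = false then (if n ≤ 1 then false else w)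
  else if b1 = false then (if n = 0 then false else if n = 1 then true else v)
  else (if n = 0 then true else u)

/-- `X₀ : 00ξ ↦ 0ξ`, `01ξ ↦ 10ξ`, `1ξ ↦ 11ξ`. -/
def x0fun (ξ : Cantor) : Cantor := fun n => x0core n (ξ 0) (ξ 1) (ξ (n - 1)) (ξ n) (ξ (n + 1))

def x0inv (ξ : Cantor) : Cantor := fun n => x0invcore n (ξ 0) (ξ 1) (ξ (n - 1)) (ξ n) (ξ (n + 1))

theorem x0_left_inv : Function.LeftInverse x0inv x0fun := by
  intro ξ
  funext n
  rcases hb0 : ξ 0 with _ | _ <;> rcases hb1 : ξ 1 with _ | _ <;>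
    rcases n with _ | _ | n <;>
    simp [x0fun, x0inv, x0core, x0invcore, hb0, hb1]

theorem x0_right_inv : Function.RightInverse x0inv x0fun := by
  intro ξ
  funext n
  rcases hb0 : ξ 0 with _ | _ <;> rcases hb1 : ξ 1 with _ | _ <;>
    rcases n with _ | _ | n <;>
    simp [x0fun, x0inv, x0core, x0invcore, hb0, hb1]

/-- Thompson's generator `X₀` as a homeomorphism of the Cantor set. -/
def X0c : Cantor ≃ₜ Cantor where
  toEquiv := ⟨x0fun, x0inv, x0_left_inv, x0_right_inv⟩
  continuous_toFun := cantor_core_continuous fun n b0 b1 _ w v u => x0core n b0 b1 w v u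
  continuous_invFun := cantor_core_continuous fun n b0 b1 _ w v u => x0invcore n b0 b1 w v u

/-- The homeomorphism `Cantor ≃ₜ Cantor × Bool` splitting off the first letter. -/
def splitHomeo : Cantor ≃ₜ Cantor × Bool where
  toEquiv := ⟨fun ξ => (shiftC ξ, ξ 0), fun p => consC p.2 p.1,
    fun ξ => by funext n; rcases n with _ | n <;> rfl,
    fun p => by
      refine Prod.ext ?_ rfl
      funext n; rfl⟩
  continuous_toFun := shiftC_continuous.prodMk (continuous_apply 0)
  continuous_invFun := by
    apply continuous_pi
    intro n
    match n with
    | 0 => exact continuous_snd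
    | n+1 => exact (continuous_apply n).comp continuous_fst

/-- Thompson's generator `X₁ = 1X₀`: the copy of `X₀` supported on the cylinder `1C`. -/
def X1c : Cantor ≃ₜ Cantor :=
  splitHomeo.trans ((fiberedHomeo fun b =>
    if b = true then X0c else Homeomorph.refl Cantor).trans splitHomeo.symm)

end

noncomputable section

/-! ### The Grigorchuk generators -/

namespace Grig

def aFun : List Bool → List Bool
  | [] => []
  | x :: w => (!x) :: w

mutual
  def bFun : List Bool → List Bool
    | [] => []
    | false :: w => false :: aFun w
    | true :: w => true :: cFun w
  def cFun : List Bool → List Bool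
    | [] => []
    | false :: w => false :: aFun w
    | true :: w => true :: dFun w
  def dFun : List Bool → List Bool
    | [] => []
    | false :: w => false :: w
    | true :: w => true :: bFun w
end

theorem aFun_involutive : Function.Involutive aFun := by
  intro w
  match w with
  | [] => rfl
  | x :: w => simp [aFun]

theorem bcd_involutive :
    ∀ w : List Bool, bFun (bFun w) = w ∧ cFun (cFun w) = w ∧ dFun (dFun w) = w := by
  intro w
  induction w with
  | nil => exact ⟨rfl, rfl, rfl⟩
  | cons x w ih =>
    rcases x with _ | _
    · simp [bFun, cFun, dFun, aFun_involutive w]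
    · simp [bFun, cFun, dFun, ih.1, ih.2.1, ih.2.2]

theorem bFun_involutive : Function.Involutive bFun := fun w => (bcd_involutive w).1
theorem cFun_involutive : Function.Involutive cFun := fun w => (bcd_involutive w).2.1
theorem dFun_involutive : Function.Involutive dFun := fun w => (bcd_involutive w).2.2

theorem aFun_length : ∀ w : List Bool, (aFun w).length = w.length := by
  intro w
  match w with
  | [] => rfl
  | x :: w => simp [aFun]

theorem bcd_length : ∀ w : List Bool,
    (bFun w).length = w.length ∧ (cFun w).length = w.length ∧ (dFun w).length = w.length := by
  intro w
  induction w with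
  | nil => exact ⟨rfl, rfl, rfl⟩
  | cons x w ih =>
    rcases x with _ | _
    · simp [bFun, cFun, dFun, aFun_length w]
    · simp [bFun, cFun, dFun, ih.1, ih.2.1, ih.2.2]

theorem bFun_length : ∀ w, (bFun w).length = w.length := fun w => (bcd_length w).1
theorem cFun_length : ∀ w, (cFun w).length = w.length := fun w => (bcd_length w).2.1
theorem dFun_length : ∀ w, (dFun w).length = w.length := fun w => (bcd_length w).2.2

/-- The generators of the first Grigorchuk group as permutations of the vertex set
`{0,1}*` of the rooted binary tree. -/
def aPerm : Equiv.Perm (List Bool) := aFun_involutive.toPerm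
def bPerm : Equiv.Perm (List Bool) := bFun_involutive.toPerm
def cPerm : Equiv.Perm (List Bool) := cFun_involutive.toPerm
def dPerm : Equiv.Perm (List Bool) := dFun_involutive.toPerm

/-- The generating set `S = {a, b, c, d}` (a set of involutions). -/
def Sset : Set (Equiv.Perm (List Bool)) := {aPerm, bPerm, cPerm, dPerm}

/-- The first Grigorchuk group. -/
def Grigorchuk : Subgroup (Equiv.Perm (List Bool)) := Subgroup.closure Sset

/-- Word length with respect to `S = {a, b, c, d}`. -/
def wordLength (g : Equiv.Perm (List Bool)) : ℕ :=
  sInf {k | ∃ l : List (Equiv.Perm (List Bool)),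
    (∀ x ∈ l, x ∈ Sset) ∧ l.length = k ∧ l.prod = g}

/-- The growth function of the first Grigorchuk group with respect to `S`. -/
def growthGrig (m : ℕ) : ℕ :=
  Nat.card {g : Equiv.Perm (List Bool) |
    ∃ l : List (Equiv.Perm (List Bool)), (∀ x ∈ l, x ∈ Sset) ∧ l.length ≤ m ∧ l.prod = g}

/-! ### Level transfer -/

def levelFun (n : ℕ) (f : List Bool → List Bool) (v : Fin n → Bool) : Fin n → Bool :=
  fun i => (f (List.ofFn v)).getD i false

theorem levelFun_involutive (n : ℕ) (f : List Bool → List Bool)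
    (hlen : ∀ l, (f l).length = l.length) (hinv : Function.Involutive f) :
    Function.Involutive (levelFun n f) := by
  intro v
  have key : ∀ u : Fin n → Bool, List.ofFn (levelFun n f u) = f (List.ofFn u) := by
    intro u
    apply List.ext_getElem
    · simp [hlen]
    · intro i h1 h2
      simp only [List.getElem_ofFn]
      simp [levelFun, List.getD_eq_getElem, h2]
  funext i
  simp only [levelFun, key v, hinv (List.ofFn v)]
  simp [List.getD_eq_getElem]

/-- The images `a_n, b_n, c_n, d_n` of the Grigorchuk generators in `Sym(X_n)`,
where the `n`-th level `X_n = {0,1}^n` is identified with `Fin n → Bool`. -/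
def aLev (n : ℕ) : Equiv.Perm (Fin n → Bool) :=
  (levelFun_involutive n aFun aFun_length aFun_involutive).toPerm
def bLev (n : ℕ) : Equiv.Perm (Fin n → Bool) :=
  (levelFun_involutive n bFun bFun_length bFun_involutive).toPerm
def cLev (n : ℕ) : Equiv.Perm (Fin n → Bool) :=
  (levelFun_involutive n cFun cFun_length cFun_involutive).toPerm
def dLev (n : ℕ) : Equiv.Perm (Fin n → Bool) :=
  (levelFun_involutive n dFun dFun_length dFun_involutive).toPerm

end Grig

/-! ### The space `C_{Y_n}` and the generating set `T_n` -/

namespace TV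

/-- The `n`-th level `X_n = {0,1}^n` of the binary tree. -/
abbrev XL (n : ℕ) : Type := Fin n → Bool

/-- `C_{Y_n} = C × Y_n` with `Y_n = X_n × {1,2,3,4}`; the sheets are indexed by `Fin 4`. -/
abbrev Mn (n : ℕ) : Type := Cantor × (XL n × Fin 4)

/-- `ρ_n = 1^n`. -/
def rhoL (n : ℕ) : XL n := fun _ => true
/-- `η_n = 1^{n-1}0`. -/
def etaL (n : ℕ) : XL n := fun i => decide ((i : ℕ) < n - 1)
/-- `θ_n = 01^{n-1}`. -/
def thetaL (n : ℕ) : XL n := fun i => decide (0 < (i : ℕ))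

/-- A type 1 generator: an element of `S_n` acting diagonally on the four sheets. -/
def type1Gen (n : ℕ) (s : Equiv.Perm (XL n)) : Mn n ≃ₜ Mn n :=
  basePermHomeo (s.prodCongr (Equiv.refl (Fin 4)))

/-- The set of type 1 generators (the truncated Grigorchuk generators). -/
def Type1Set (n : ℕ) : Set (Mn n ≃ₜ Mn n) :=
  {type1Gen n (Grig.aLev n), type1Gen n (Grig.bLev n),
   type1Gen n (Grig.cLev n), type1Gen n (Grig.dLev n)}

/-- A type 2 generator: an element of `Sym(4)_{η_n}`. -/
def type2Gen (n : ℕ) (π : Equiv.Perm (Fin 4)) : Mn n ≃ₜ Mn n :=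
  basePermHomeo (Equiv.prodCongrRight fun x : XL n =>
    if x = etaL n then π else Equiv.refl (Fin 4))

/-- The copy `Sym(4)_{η_n}` of the symmetric group over `η_n` (type 2 generators). -/
def Type2Set (n : ℕ) : Set (Mn n ≃ₜ Mn n) := Set.range (type2Gen n)

/-- The linking transposition `τ_n` (type 3), exchanging the first sheets over
`ρ_n` and `θ_n`. -/
def tauN (n : ℕ) : Mn n ≃ₜ Mn n :=
  basePermHomeo (Equiv.swap (rhoL n, (0 : Fin 4)) (thetaL n, (0 : Fin 4)))

/-- `X₁^{(n)}`: the copy of `X₀` supported on the fourth sheet over `ρ_n` (type 4). -/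
def X1n (n : ℕ) : Mn n ≃ₜ Mn n :=
  fiberedHomeo fun y : XL n × Fin 4 =>
    if y = (rhoL n, (3 : Fin 4)) then X0c else Homeomorph.refl Cantor

/-! The homeomorphism of `C × {1,2,3,4}` acting as `X₀` on `D = C_2 ⊔ C_3` (sheets `1`, `2`
in the `Fin 4` indexing) under the identification `(ξ, i) ↦ (i-2)ξ`, and trivial elsewhere. -/

def x0dSheet (i : Fin 4) (b0 : Bool) : Fin 4 :=
  if i = 1 then (if b0 = false then 1 else 2) else i

def x0dCore (i : Fin 4) (n : ℕ) (b0 w v u : Bool) : Bool :=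
  if i = 1 then (if b0 = false then u else if n = 0 then false else v)
  else if i = 2 then (if n = 0 then true else w)
  else v

def x0dSheetInv (i : Fin 4) (b0 : Bool) : Fin 4 :=
  if i = 2 then (if b0 = false then 1 else 2) else i

def x0dCoreInv (i : Fin 4) (n : ℕ) (b0 w v u : Bool) : Bool :=
  if i = 1 then (if n = 0 then false else w)
  else if i = 2 then (if b0 = false then (if n = 0 then true else v) else u)
  else v

def x0dFun (p : Cantor × Fin 4) : Cantor × Fin 4 :=
  ((fun n => x0dCore p.2 n (p.1 0) (p.1 (n - 1)) (p.1 n) (p.1 (n + 1))),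
    x0dSheet p.2 (p.1 0))

def x0dInvFun (p : Cantor × Fin 4) : Cantor × Fin 4 :=
  ((fun n => x0dCoreInv p.2 n (p.1 0) (p.1 (n - 1)) (p.1 n) (p.1 (n + 1))),
    x0dSheetInv p.2 (p.1 0))

theorem x0d_left_inv : Function.LeftInverse x0dInvFun x0dFun := by
  rintro ⟨ξ, i⟩
  rcases hb0 : ξ 0 with _ | _ <;> fin_cases i <;>
    refine Prod.ext (funext fun n => ?_) ?_ <;>
    first
      | (rcases n with _ | n <;>
          simp [x0dFun, x0dInvFun, x0dCore, x0dCoreInv, x0dSheet, x0dSheetInv, hb0])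
      | simp [x0dFun, x0dInvFun, x0dCore, x0dCoreInv, x0dSheet, x0dSheetInv, hb0]

theorem x0d_right_inv : Function.RightInverse x0dInvFun x0dFun := by
  rintro ⟨ξ, i⟩
  rcases hb0 : ξ 0 with _ | _ <;> fin_cases i <;>
    refine Prod.ext (funext fun n => ?_) ?_ <;>
    first
      | (rcases n with _ | n <;>
          simp [x0dFun, x0dInvFun, x0dCore, x0dCoreInv, x0dSheet, x0dSheetInv, hb0])
      | simp [x0dFun, x0dInvFun, x0dCore, x0dCoreInv, x0dSheet, x0dSheetInv, hb0]

theorem x0dFun_continuous : Continuous x0dFun := by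
  have h : Continuous fun p : Cantor × Fin 4 => x0dFun (p.1, p.2) := by
    refine cont_fibered (Z := Cantor × Fin 4) (fun ξ i => x0dFun (ξ, i)) fun i => ?_
    refine Continuous.prodMk ?_ ?_
    · exact cantor_core_continuous fun n b0 _ _ w v u => x0dCore i n b0 w v u
    · exact Continuous.comp
        (continuous_of_discreteTopology (α := Bool) (f := x0dSheet i)) (continuous_apply 0)
  simpa using h

theorem x0dInvFun_continuous : Continuous x0dInvFun := by
  have h : Continuous fun p : Cantor × Fin 4 => x0dInvFun (p.1, p.2) := by
    refine cont_fibered (Z := Cantor × Fin 4) (fun ξ i => x0dInvFun (ξ, i)) fun i => ?_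
    refine Continuous.prodMk ?_ ?_
    · exact cantor_core_continuous fun n b0 _ _ w v u => x0dCoreInv i n b0 w v u
    · exact Continuous.comp
        (continuous_of_discreteTopology (α := Bool) (f := x0dSheetInv i)) (continuous_apply 0)
  simpa using h

def X0D : (Cantor × Fin 4) ≃ₜ (Cantor × Fin 4) where
  toEquiv := ⟨x0dFun, x0dInvFun, x0d_left_inv, x0d_right_inv⟩
  continuous_toFun := x0dFun_continuous
  continuous_invFun := x0dInvFun_continuous

/-- Reshuffling `C × (X_n × {1,…,4}) ≃ₜ (C × {1,…,4}) × X_n`. -/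
def reshuffle (n : ℕ) : Mn n ≃ₜ (Cantor × Fin 4) × XL n :=
  ((Homeomorph.refl Cantor).prodCongr (Homeomorph.prodComm (XL n) (Fin 4))).trans
    (Homeomorph.prodAssoc Cantor (Fin 4) (XL n)).symm

/-- `X₀^{(n)}`: acting as `X₀` on `D_n = C_{(ρ_n,2)} ⊔ C_{(ρ_n,3)}` (type 4). -/
def X0n (n : ℕ) : Mn n ≃ₜ Mn n :=
  (reshuffle n).trans ((fiberedHomeo fun x : XL n =>
    if x = rhoL n then X0D else Homeomorph.refl (Cantor × Fin 4)).trans (reshuffle n).symm)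

/-- The type 4 generators. -/
def Type4Set (n : ℕ) : Set (Mn n ≃ₜ Mn n) := {X0n n, X1n n}

/-- The generating set `T_n`. -/
def TnSet (n : ℕ) : Set (Mn n ≃ₜ Mn n) :=
  Type1Set n ∪ Type2Set n ∪ {tauN n} ∪ Type4Set n

/-- The group `W_n = ⟨T_n⟩`. -/
def Wn (n : ℕ) : Subgroup (Mn n ≃ₜ Mn n) := Subgroup.closure (TnSet n)

/-- The generators of types `2`, `3` and `4`. -/
def typeSet (n : ℕ) : ℕ → Set (Mn n ≃ₜ Mn n)
  | 2 => Type2Set n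
  | 3 => {tauN n}
  | 4 => Type4Set n
  | _ => ∅

end TV

end
/-! ### The identification of the four sheets over `ρ_n` with the Cantor set -/

namespace TV

def quadIdx : Bool → Bool → Fin 4
  | false, false => 0
  | false, true => 1
  | true, false => 2
  | true, true => 3

def quadHi (i : Fin 4) : Bool := decide (2 ≤ (i : ℕ))
def quadLo (i : Fin 4) : Bool := decide ((i : ℕ) % 2 = 1)

/-- The identification of `C × {1,2,3,4}` with `C`, concatenating the four copies in the
order of the index. -/
def quadHomeo : (Cantor × Fin 4) ≃ₜ Cantor where
  toEquiv := ⟨fun p => consC (quadHi p.2) (consC (quadLo p.2) p.1),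
    fun ξ => (shiftC (shiftC ξ), quadIdx (ξ 0) (ξ 1)),
    by
      rintro ⟨ξ, i⟩
      refine Prod.ext (funext fun n => rfl) ?_
      fin_cases i <;> simp [quadHi, quadLo, quadIdx, consC, shiftC],
    by
      intro ξ
      rcases hb0 : ξ 0 with _ | _ <;> rcases hb1 : ξ 1 with _ | _ <;>
        funext n <;> rcases n with _ | _ | n <;>
        simp [consC, shiftC, quadIdx, quadHi, quadLo, hb0, hb1] <;> try decide⟩
  continuous_toFun := by
    have h : Continuous fun p : Cantor × Fin 4 =>
        (fun ξ i => consC (quadHi i) (consC (quadLo i) ξ)) p.1 p.2 :=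
      cont_fibered (Z := Cantor) _ fun i =>
        (consC_continuous (quadHi i)).comp (consC_continuous (quadLo i))
    exact h
  continuous_invFun := by
    refine Continuous.prodMk (shiftC_continuous.comp shiftC_continuous) ?_
    have h : Continuous (fun p : Bool × Bool => quadIdx p.1 p.2) :=
      continuous_of_discreteTopology
    have h2 : Continuous fun ξ : Cantor => (ξ 0, ξ 1) :=
      (continuous_apply 0).prodMk (continuous_apply 1)
    exact h.comp h2

/-- The copy of a homeomorphism `f` of the Cantor set supported on the union of the four
sheets over `ρ_n`, via the identification of this union with the Cantor set. -/
def liftRho (n : ℕ) (f : Cantor ≃ₜ Cantor) : Mn n ≃ₜ Mn n :=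
  (reshuffle n).trans ((fiberedHomeo fun x : XL n =>
    if x = rhoL n then quadHomeo.trans (f.trans quadHomeo.symm)
    else Homeomorph.refl (Cantor × Fin 4)).trans (reshuffle n).symm)

end TV

/-- Thompson's group `F` as a group of homeomorphisms of the Cantor set, generated by the
standard generators `X₀` and `X₁`. -/
def ThompsonF : Subgroup (Cantor ≃ₜ Cantor) := Subgroup.closure {X0c, X1c}

noncomputable section SwapMachinery

open List in
theorem wordAppend_nil (ζ : Cantor) : wordAppend [] ζ = ζ := by
  funext n; simp [wordAppend]

theorem wordAppend_append (u t : List Bool) (ζ : Cantor) :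
    wordAppend (u ++ t) ζ = wordAppend u (wordAppend t ζ) := by
  funext n
  simp only [wordAppend, List.length_append]
  by_cases h1 : n < u.length
  · rw [dif_pos (by omega), dif_pos h1, List.getElem_append_left h1]
  · rw [dif_neg h1]
    by_cases h2 : n < u.length + t.length
    · rw [dif_pos h2, dif_pos (by omega), List.getElem_append_right (by omega)]
    · rw [dif_neg h2, dif_neg (by omega)]
      congr 1; omega

theorem consC_zero (b : Bool) (ζ : Cantor) : consC b ζ 0 = b := rfl
theorem consC_succ (b : Bool) (ζ : Cantor) (n : ℕ) : consC b ζ (n+1) = ζ n := rfl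

theorem wordAppend_singleton (b : Bool) (ζ : Cantor) :
    wordAppend [b] ζ = consC b ζ := by
  funext n
  match n with
  | 0 => simp [wordAppend, consC]
  | n+1 => simp [wordAppend, consC]

theorem wordAppend_concat (u : List Bool) (b : Bool) (ζ : Cantor) :
    wordAppend (u ++ [b]) ζ = wordAppend u (consC b ζ) := by
  rw [wordAppend_append, wordAppend_singleton]

theorem consC_shiftC (ζ : Cantor) : consC (ζ 0) (shiftC ζ) = ζ := by
  funext n; match n with
  | 0 => rfl
  | n+1 => rfl

theorem wordAppend_eta (u : List Bool) (ζ : Cantor) :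
    wordAppend (u ++ [ζ 0]) (shiftC ζ) = wordAppend u ζ := by
  rw [wordAppend_concat, consC_shiftC]

/-- `ξ` has the finite word `w` as a prefix. -/
def hasPref (w : List Bool) (ξ : Cantor) : Prop :=
  ∀ i, (h : i < w.length) → ξ i = w[i]

instance (w : List Bool) (ξ : Cantor) : Decidable (hasPref w ξ) :=
  Nat.decidableBallLT w.length fun i h => ξ i = w[i]

theorem hasPref_wordAppend (w : List Bool) (ζ : Cantor) : hasPref w (wordAppend w ζ) :=
  fun i h => by simp [wordAppend, h]

/-- Dropping the first `k` letters. -/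
def dropC (k : ℕ) (ξ : Cantor) : Cantor := fun n => ξ (n + k)

theorem dropC_wordAppend (w : List Bool) (ζ : Cantor) :
    dropC w.length (wordAppend w ζ) = ζ := by
  funext n
  simp only [dropC, wordAppend]
  rw [dif_neg (by omega)]
  congr 1; omega

theorem wordAppend_dropC {w : List Bool} {ξ : Cantor} (h : hasPref w ξ) :
    wordAppend w (dropC w.length ξ) = ξ := by
  funext n
  simp only [wordAppend, dropC]
  by_cases h1 : n < w.length
  · rw [dif_pos h1, h n h1]
  · rw [dif_neg h1]; congr 1; omega

theorem exists_of_hasPref {w : List Bool} {ξ : Cantor} (h : hasPref w ξ) :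
    ∃ ζ, wordAppend w ζ = ξ := ⟨dropC w.length ξ, wordAppend_dropC h⟩

/-- Two words are incomparable in the prefix order. -/
def Incomp (u v : List Bool) : Prop := ¬ u <+: v ∧ ¬ v <+: u

theorem Incomp.symm {u v : List Bool} (h : Incomp u v) : Incomp v u := ⟨h.2, h.1⟩

theorem Incomp.ne {u v : List Bool} (h : Incomp u v) : u ≠ v := by
  rintro rfl; exact h.1 (List.prefix_refl u)

theorem Incomp.ne_nil {u v : List Bool} (h : Incomp u v) : u ≠ [] := by
  rintro rfl; exact h.1 (List.nil_prefix)

theorem Incomp.ne_nil' {u v : List Bool} (h : Incomp u v) : v ≠ [] := h.symm.ne_nil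

theorem prefix_of_hasPref_le {u v : List Bool} {ξ : Cantor} (hu : hasPref u ξ)
    (hv : hasPref v ξ) (hle : u.length ≤ v.length) : u <+: v := by
  have he : u = v.take u.length := by
    apply List.ext_getElem (by simp [hle])
    intro i h1 h2
    rw [List.getElem_take]
    rw [← hu i h1, hv i (by omega)]
  rw [he]
  exact List.take_prefix _ _

theorem not_hasPref_both {u v : List Bool} {ξ : Cantor} (hI : Incomp u v)
    (hu : hasPref u ξ) (hv : hasPref v ξ) : False := by
  rcases le_total u.length v.length with h | h
  · exact hI.1 (prefix_of_hasPref_le hu hv h)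
  · exact hI.2 (prefix_of_hasPref_le hv hu h)

theorem hasPref_of_prefix {u v : List Bool} {ξ : Cantor} (h : u <+: v) (hv : hasPref v ξ) :
    hasPref u ξ := by
  intro i hi
  obtain ⟨t, rfl⟩ := h
  rw [hv i (by simp; omega), List.getElem_append_left hi]

theorem not_hasPref_of_incomp {u v : List Bool} (hI : Incomp u v) (ζ : Cantor) :
    ¬ hasPref u (wordAppend v ζ) :=
  fun h => not_hasPref_both hI h (hasPref_wordAppend v ζ)

/-- Incomparability of words of the same length. -/
theorem incomp_of_ne_same_length {u v : List Bool} (hlen : u.length = v.length)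
    (hne : u ≠ v) : Incomp u v := by
  constructor
  · intro h; exact hne (List.IsPrefix.eq_of_length h hlen)
  · intro h; exact hne (List.IsPrefix.eq_of_length h hlen.symm).symm

theorem incomp_append {u v : List Bool} (hI : Incomp u v) (s t : List Bool) :
    Incomp (u ++ s) (v ++ t) := by
  constructor
  · intro h
    have h1 : u <+: v ++ t := (List.prefix_append u s).trans h
    rcases List.prefix_or_prefix_of_prefix h1 (List.prefix_append v t) with h2 | h2
    · exact hI.1 h2
    · exact hI.2 h2
  · intro h
    have h1 : v <+: u ++ s := (List.prefix_append v t).trans h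
    rcases List.prefix_or_prefix_of_prefix h1 (List.prefix_append u s) with h2 | h2
    · exact hI.2 h2
    · exact hI.1 h2

theorem incomp_cons_of_ne {b c : Bool} (h : b ≠ c) (s t : List Bool) :
    Incomp (b :: s) (c :: t) := by
  constructor
  · intro hp; rw [List.cons_prefix_cons] at hp; exact h hp.1
  · intro hp; rw [List.cons_prefix_cons] at hp; exact h hp.1.symm

theorem incomp_cons_iff {b : Bool} {s t : List Bool} :
    Incomp (b :: s) (b :: t) ↔ Incomp s t := by
  constructor
  · rintro ⟨h1, h2⟩
    exact ⟨fun h => h1 (by rw [List.cons_prefix_cons]; exact ⟨rfl, h⟩),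
           fun h => h2 (by rw [List.cons_prefix_cons]; exact ⟨rfl, h⟩)⟩
  · rintro ⟨h1, h2⟩
    exact ⟨fun h => h1 ((List.cons_prefix_cons.1 h).2),
           fun h => h2 ((List.cons_prefix_cons.1 h).2)⟩

/-- A function `Cantor → Cantor` each of whose output coordinates depends on finitely
many input coordinates is continuous. -/
theorem continuous_of_locally_determined (f : Cantor → Cantor) (d : ℕ → ℕ)
    (h : ∀ n ξ η, (∀ i, i ≤ d n → ξ i = η i) → f ξ n = f η n) : Continuous f := by
  apply continuous_pi
  intro n
  have key : (fun ξ => f ξ n) =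
      (fun v : Fin (d n + 1) → Bool =>
        f (fun i => if hh : i < d n + 1 then v ⟨i, hh⟩ else false) n) ∘
      (fun ξ (i : Fin (d n + 1)) => ξ (i : ℕ)) := by
    funext ξ
    exact h n ξ _ (fun i hi => by simp [dif_pos (by omega : i < d n + 1), hi])
  rw [key]
  exact continuous_of_discreteTopology.comp (continuous_pi fun i => continuous_apply _)

/-- The underlying function of the swap of the cylinders over `u` and `v`. -/
def swFun (u v : List Bool) (ξ : Cantor) : Cantor :=
  if hasPref u ξ then wordAppend v (dropC u.length ξ)
  else if hasPref v ξ then wordAppend u (dropC v.length ξ)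
  else ξ

theorem swFun_left (u v : List Bool) (ζ : Cantor) :
    swFun u v (wordAppend u ζ) = wordAppend v ζ := by
  rw [swFun, if_pos (hasPref_wordAppend u ζ), dropC_wordAppend]

theorem swFun_right {u v : List Bool} (hI : Incomp u v) (ζ : Cantor) :
    swFun u v (wordAppend v ζ) = wordAppend u ζ := by
  rw [swFun, if_neg (not_hasPref_of_incomp hI ζ), if_pos (hasPref_wordAppend v ζ),
    dropC_wordAppend]

theorem swFun_fix {u v : List Bool} {ξ : Cantor} (h1 : ¬ hasPref u ξ) (h2 : ¬ hasPref v ξ) :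
    swFun u v ξ = ξ := by
  rw [swFun, if_neg h1, if_neg h2]

theorem swFun_involutive {u v : List Bool} (hI : Incomp u v) :
    Function.Involutive (swFun u v) := by
  intro ξ
  by_cases h1 : hasPref u ξ
  · obtain ⟨ζ, rfl⟩ := exists_of_hasPref h1
    rw [swFun_left, swFun_right hI]
  · by_cases h2 : hasPref v ξ
    · obtain ⟨ζ, rfl⟩ := exists_of_hasPref h2
      rw [swFun_right hI, swFun_left]
    · rw [swFun_fix h1 h2, swFun_fix h1 h2]

theorem swFun_continuous (u v : List Bool) : Continuous (swFun u v) := by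
  apply continuous_of_locally_determined _ (fun n => n + u.length + v.length)
  intro n ξ η hagree
  have hu : hasPref u ξ ↔ hasPref u η := by
    unfold hasPref
    exact forall_congr' fun i => forall_congr' fun h => by rw [hagree i (by omega)]
  have hv : hasPref v ξ ↔ hasPref v η := by
    unfold hasPref
    exact forall_congr' fun i => forall_congr' fun h => by rw [hagree i (by omega)]
  unfold swFun
  by_cases h1 : hasPref u ξ
  · rw [if_pos h1, if_pos (hu.1 h1)]
    simp only [wordAppend, dropC]
    split
    · rfl
    · exact hagree _ (by omega)
  · rw [if_neg h1, if_neg (fun h => h1 (hu.2 h))]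
    by_cases h2 : hasPref v ξ
    · rw [if_pos h2, if_pos (hv.1 h2)]
      simp only [wordAppend, dropC]
      split
      · rfl
      · exact hagree _ (by omega)
    · rw [if_neg h2, if_neg (fun h => h2 (hv.2 h))]
      exact hagree n (by omega)

/-- The swap of the cylinders over two incomparable words `u` and `v`, as a
homeomorphism of the Cantor set. -/
def swH (u v : List Bool) (hI : Incomp u v) : Cantor ≃ₜ Cantor where
  toEquiv := (swFun_involutive hI).toPerm
  continuous_toFun := swFun_continuous u v
  continuous_invFun := swFun_continuous u v

theorem swH_apply (u v : List Bool) (hI : Incomp u v) (ξ : Cantor) :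
    swH u v hI ξ = swFun u v ξ := rfl

theorem swH_comm (u v : List Bool) (hI : Incomp u v) :
    swH u v hI = swH v u hI.symm := by
  apply Homeomorph.ext
  intro ξ
  rw [swH_apply, swH_apply]
  by_cases h1 : hasPref u ξ
  · obtain ⟨ζ, rfl⟩ := exists_of_hasPref h1
    rw [swFun_left, swFun_right hI.symm]
  · by_cases h2 : hasPref v ξ
    · obtain ⟨ζ, rfl⟩ := exists_of_hasPref h2
      rw [swFun_right hI, swFun_left]
    · rw [swFun_fix h1 h2, swFun_fix h2 h1]

end SwapMachinery

noncomputable section RigidMachinery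

theorem homeo_mul_apply (f g : Cantor ≃ₜ Cantor) (ξ : Cantor) : (f * g) ξ = f (g ξ) := rfl
theorem homeo_one_apply (ξ : Cantor) : (1 : Cantor ≃ₜ Cantor) ξ = ξ := rfl
theorem homeo_inv_apply (f : Cantor ≃ₜ Cantor) (ξ : Cantor) : f⁻¹ ξ = f.symm ξ := rfl

/-- `g` maps the cylinder over `u` rigidly onto the cylinder over `v`. -/
def Rigid (g : Cantor ≃ₜ Cantor) (u v : List Bool) : Prop :=
  ∀ ζ, g (wordAppend u ζ) = wordAppend v ζ

theorem rigid_one (u : List Bool) : Rigid 1 u u := fun _ => rfl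

theorem rigid_mul {g f : Cantor ≃ₜ Cantor} {u v w : List Bool}
    (hg : Rigid g u v) (hf : Rigid f v w) : Rigid (f * g) u w := by
  intro ζ
  rw [homeo_mul_apply, hg ζ, hf ζ]

theorem rigid_inv {g : Cantor ≃ₜ Cantor} {u v : List Bool} (hg : Rigid g u v) :
    Rigid g⁻¹ v u := by
  intro ζ
  rw [← hg ζ, homeo_inv_apply, Homeomorph.symm_apply_apply]

theorem rigid_extend {g : Cantor ≃ₜ Cantor} {u v : List Bool} (hg : Rigid g u v)
    (t : List Bool) : Rigid g (u ++ t) (v ++ t) := by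
  intro ζ
  rw [wordAppend_append, wordAppend_append, hg]

theorem rigid_split {g : Cantor ≃ₜ Cantor} {u v : List Bool}
    (h0 : Rigid g (u ++ [false]) (v ++ [false])) (h1 : Rigid g (u ++ [true]) (v ++ [true])) :
    Rigid g u v := by
  intro ζ
  rw [← wordAppend_eta u ζ, ← wordAppend_eta v ζ]
  cases hb : ζ 0
  · rw [hb] at *; exact h0 (shiftC ζ)
  · rw [hb] at *; exact h1 (shiftC ζ)

theorem rigid_swH_self {u v r : List Bool} (hI : Incomp u v) (hru : Incomp r u)
    (hrv : Incomp r v) : Rigid (swH u v hI) r r := by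
  intro ζ
  rw [swH_apply, swFun_fix (not_hasPref_of_incomp hru.symm ζ) (not_hasPref_of_incomp hrv.symm ζ)]

/-- Conjugation of a cylinder swap by an element rigid on the two cylinders. -/
theorem swH_conj {g : Cantor ≃ₜ Cantor} {u v u' v' : List Bool} (hI : Incomp u v)
    (hI' : Incomp u' v') (hu : Rigid g u u') (hv : Rigid g v v') :
    swH u v hI = g⁻¹ * swH u' v' hI' * g := by
  apply Homeomorph.ext
  intro ξ
  rw [homeo_mul_apply, homeo_mul_apply, swH_apply, swH_apply]
  by_cases h1 : hasPref u ξ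
  · obtain ⟨ζ, rfl⟩ := exists_of_hasPref h1
    rw [swFun_left, hu ζ, swFun_left, ← hv ζ, homeo_inv_apply, Homeomorph.symm_apply_apply]
  · by_cases h2 : hasPref v ξ
    · obtain ⟨ζ, rfl⟩ := exists_of_hasPref h2
      rw [swFun_right hI, hv ζ, swFun_right hI', ← hu ζ, homeo_inv_apply,
        Homeomorph.symm_apply_apply]
    · rw [swFun_fix h1 h2]
      have hg1 : ¬ hasPref u' (g ξ) := by
        intro h
        obtain ⟨ζ, hζ⟩ := exists_of_hasPref h
        apply h1
        have : ξ = wordAppend u ζ := by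
          have := hu ζ
          rw [hζ] at this
          exact (g.toEquiv.injective this).symm
        rw [this]; exact hasPref_wordAppend u ζ
      have hg2 : ¬ hasPref v' (g ξ) := by
        intro h
        obtain ⟨ζ, hζ⟩ := exists_of_hasPref h
        apply h2
        have : ξ = wordAppend v ζ := by
          have := hv ζ
          rw [hζ] at this
          exact (g.toEquiv.injective this).symm
        rw [this]; exact hasPref_wordAppend v ζ
      rw [swFun_fix hg1 hg2, homeo_inv_apply, Homeomorph.symm_apply_apply]

theorem swH_mem_of_conj {G : Subgroup (Cantor ≃ₜ Cantor)} {g : Cantor ≃ₜ Cantor}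
    {u v u' v' : List Bool} (hI : Incomp u v) (hI' : Incomp u' v')
    (hu : Rigid g u u') (hv : Rigid g v v') (hg : g ∈ G)
    (hsw : swH u' v' hI' ∈ G) : swH u v hI ∈ G := by
  rw [swH_conj hI hI' hu hv]
  exact mul_mem (mul_mem (inv_mem hg) hsw) hg

end RigidMachinery

noncomputable section BaseElements

open TV

theorem wordAppend_pair (b0 b1 : Bool) (ζ : Cantor) :
    wordAppend [b0, b1] ζ = consC b0 (consC b1 ζ) := by
  rw [show [b0, b1] = [b0] ++ [b1] from rfl, wordAppend_append, wordAppend_singleton,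
    wordAppend_singleton]

theorem quadHomeo_pair (ζ : Cantor) (i : Fin 4) :
    quadHomeo (ζ, i) = wordAppend [quadHi i, quadLo i] ζ := by
  rw [wordAppend_pair]; rfl

theorem quadHomeo_symm_word (b0 b1 : Bool) (ζ : Cantor) :
    quadHomeo.symm (wordAppend [b0, b1] ζ) = (ζ, quadIdx b0 b1) := by
  rw [wordAppend_pair]
  show (shiftC (shiftC (consC b0 (consC b1 ζ))), quadIdx _ _) = (ζ, quadIdx b0 b1)
  have h1 : shiftC (shiftC (consC b0 (consC b1 ζ))) = ζ := by
    funext n; rfl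
  have h2 : (consC b0 (consC b1 ζ)) 0 = b0 := rfl
  have h3 : (consC b0 (consC b1 ζ)) 1 = b1 := rfl
  rw [h1, h2, h3]

theorem quadHi_quadIdx (b0 b1 : Bool) : quadHi (quadIdx b0 b1) = b0 := by
  cases b0 <;> cases b1 <;> rfl

theorem quadLo_quadIdx (b0 b1 : Bool) : quadLo (quadIdx b0 b1) = b1 := by
  cases b0 <;> cases b1 <;> rfl

theorem quadIdx_inj {b0 b1 c0 c1 : Bool} (h : quadIdx b0 b1 = quadIdx c0 c1) :
    b0 = c0 ∧ b1 = c1 := by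
  revert h; cases b0 <;> cases b1 <;> cases c0 <;> cases c1 <;> decide

/-- The depth-2 prefix relabeling homeomorphism attached to a permutation of `Fin 4`. -/
def Pq (σ : Equiv.Perm (Fin 4)) : Cantor ≃ₜ Cantor :=
  quadHomeo.symm.trans ((basePermHomeo σ).trans quadHomeo)

theorem basePermHomeo_pair {X Y : Type*} [TopologicalSpace X] [TopologicalSpace Y]
    [DiscreteTopology Y] (e : Equiv.Perm Y) (x : X) (y : Y) :
    basePermHomeo e (x, y) = (x, e y) := rfl

theorem Pq_word (σ : Equiv.Perm (Fin 4)) (b0 b1 : Bool) (ζ : Cantor) :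
    Pq σ (wordAppend [b0, b1] ζ) =
      wordAppend [quadHi (σ (quadIdx b0 b1)), quadLo (σ (quadIdx b0 b1))] ζ := by
  show quadHomeo (basePermHomeo σ (quadHomeo.symm (wordAppend [b0, b1] ζ))) = _
  rw [quadHomeo_symm_word, basePermHomeo_pair, quadHomeo_pair]

theorem Pq_rigid (σ : Equiv.Perm (Fin 4)) {b0 b1 c0 c1 : Bool}
    (h : σ (quadIdx b0 b1) = quadIdx c0 c1) : Rigid (Pq σ) [b0, b1] [c0, c1] := by
  intro ζ
  rw [Pq_word, h, quadHi_quadIdx, quadLo_quadIdx]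

/-- The generator `A`: the quad-conjugate of `X0D`, i.e. the copy of `X₀` acting on the
middle two quarters of the Cantor set. -/
def Ael : Cantor ≃ₜ Cantor := quadHomeo.symm.trans (X0D.trans quadHomeo)

theorem Ael_word (b0 b1 : Bool) (ζ : Cantor) :
    Ael (wordAppend [b0, b1] ζ) = quadHomeo (X0D (ζ, quadIdx b0 b1)) := by
  show quadHomeo (X0D (quadHomeo.symm (wordAppend [b0, b1] ζ))) = _
  rw [quadHomeo_symm_word]

theorem X0D_sheet0 (ζ : Cantor) : X0D (ζ, 0) = (ζ, 0) := by
  show TV.x0dFun (ζ, 0) = (ζ, 0)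
  refine Prod.ext ?_ ?_
  · funext n; simp [TV.x0dFun, TV.x0dCore]
  · simp [TV.x0dFun, TV.x0dSheet]

theorem X0D_sheet3 (ζ : Cantor) : X0D (ζ, 3) = (ζ, 3) := by
  show TV.x0dFun (ζ, 3) = (ζ, 3)
  refine Prod.ext ?_ ?_
  · funext n; simp [TV.x0dFun, TV.x0dCore]
  · simp [TV.x0dFun, TV.x0dSheet]

theorem X0D_sheet1_false (ζ : Cantor) : X0D (consC false ζ, 1) = (ζ, 1) := by
  show TV.x0dFun (consC false ζ, 1) = (ζ, 1)
  refine Prod.ext ?_ ?_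
  · funext n; simp [TV.x0dFun, TV.x0dCore, consC_zero, consC_succ]
  · simp [TV.x0dFun, TV.x0dSheet, consC_zero]

theorem X0D_sheet1_true (ζ : Cantor) : X0D (consC true ζ, 1) = (consC false ζ, 2) := by
  show TV.x0dFun (consC true ζ, 1) = (consC false ζ, 2)
  refine Prod.ext ?_ ?_
  · funext n
    match n with
    | 0 => simp [TV.x0dFun, TV.x0dCore, consC_zero]
    | n+1 => simp [TV.x0dFun, TV.x0dCore, consC_zero, consC_succ]
  · simp [TV.x0dFun, TV.x0dSheet, consC_zero]

theorem X0D_sheet2 (ζ : Cantor) : X0D (ζ, 2) = (consC true ζ, 2) := by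
  show TV.x0dFun (ζ, 2) = (consC true ζ, 2)
  refine Prod.ext ?_ ?_
  · funext n
    match n with
    | 0 => simp [TV.x0dFun, TV.x0dCore, consC_zero]
    | n+1 => simp [TV.x0dFun, TV.x0dCore, consC_succ]
  · simp [TV.x0dFun, TV.x0dSheet]

-- Atomic rigidity facts for `Ael`.
theorem Ael_rigid_00 : Rigid Ael [false, false] [false, false] := by
  intro ζ
  rw [Ael_word, show quadIdx false false = 0 from rfl, X0D_sheet0, quadHomeo_pair]
  rfl

theorem Ael_rigid_11 : Rigid Ael [true, true] [true, true] := by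
  intro ζ
  rw [Ael_word, show quadIdx true true = 3 from rfl, X0D_sheet3, quadHomeo_pair]
  rfl

theorem Ael_rigid_010 : Rigid Ael [false, true, false] [false, true] := by
  intro ζ
  rw [show [false, true, false] = [false, true] ++ [false] from rfl, wordAppend_concat,
    Ael_word, show quadIdx false true = 1 from rfl, X0D_sheet1_false, quadHomeo_pair]
  rfl

theorem Ael_rigid_011 : Rigid Ael [false, true, true] [true, false, false] := by
  intro ζ
  rw [show [false, true, true] = [false, true] ++ [true] from rfl, wordAppend_concat,
    Ael_word, show quadIdx false true = 1 from rfl, X0D_sheet1_true, quadHomeo_pair,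
    show [true, false, false] = [true, false] ++ [false] from rfl, wordAppend_concat]
  rfl

theorem Ael_rigid_10 : Rigid Ael [true, false] [true, false, true] := by
  intro ζ
  rw [Ael_word, show quadIdx true false = 2 from rfl, X0D_sheet2, quadHomeo_pair,
    show [true, false, true] = [true, false] ++ [true] from rfl, wordAppend_concat]
  rfl

end BaseElements

noncomputable section CompositeElements

open TV

/-- The group generated (on the Cantor-set side) by the depth-2 relabelings and `A`. -/
def KV : Subgroup (Cantor ≃ₜ Cantor) := Subgroup.closure (Set.range Pq ∪ {Ael})

theorem Pq_mem (σ : Equiv.Perm (Fin 4)) : Pq σ ∈ KV :=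
  Subgroup.subset_closure (Or.inl ⟨σ, rfl⟩)

theorem Ael_mem : Ael ∈ KV := Subgroup.subset_closure (Or.inr rfl)

def σ0 : Equiv.Perm (Fin 4) := ⟨![2,0,1,3], ![1,2,0,3], by decide, by decide⟩
def σ1 : Equiv.Perm (Fin 4) := ⟨![0,2,3,1], ![0,3,1,2], by decide, by decide⟩
def σd : Equiv.Perm (Fin 4) := ⟨![1,0,2,3], ![1,0,2,3], by decide, by decide⟩
def σf : Equiv.Perm (Fin 4) := ⟨![2,3,0,1], ![2,3,0,1], by decide, by decide⟩
def σp : Equiv.Perm (Fin 4) := ⟨![2,3,1,0], ![3,2,0,1], by decide, by decide⟩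
def σs : Equiv.Perm (Fin 4) := ⟨![0,2,1,3], ![0,2,1,3], by decide, by decide⟩

/-- The element `M = σ₀ A σ₀⁻¹`, the copy of `X₀` supported on the cylinder `0`. -/
def Mel : Cantor ≃ₜ Cantor := Pq σ0 * Ael * (Pq σ0)⁻¹

theorem Mel_rigid_000 : Rigid Mel [false,false,false] [false,false] := by
  have s1 : Rigid (Pq σ0)⁻¹ [false,false,false] [false,true,false] := by
    simpa using rigid_extend
      (rigid_inv (Pq_rigid σ0 (show σ0 (quadIdx false true) = quadIdx false false by decide)))
      [false]
  exact rigid_mul s1 (rigid_mul Ael_rigid_010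
    (Pq_rigid σ0 (show σ0 (quadIdx false true) = quadIdx false false by decide)))

theorem Mel_rigid_001 : Rigid Mel [false,false,true] [false,true,false] := by
  have s1 : Rigid (Pq σ0)⁻¹ [false,false,true] [false,true,true] := by
    simpa using rigid_extend
      (rigid_inv (Pq_rigid σ0 (show σ0 (quadIdx false true) = quadIdx false false by decide)))
      [true]
  have s3 : Rigid (Pq σ0) [true,false,false] [false,true,false] := by
    simpa using rigid_extend
      (Pq_rigid σ0 (show σ0 (quadIdx true false) = quadIdx false true by decide)) [false]
  exact rigid_mul s1 (rigid_mul Ael_rigid_011 s3)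

theorem Mel_rigid_01 : Rigid Mel [false,true] [false,true,true] := by
  have s1 : Rigid (Pq σ0)⁻¹ [false,true] [true,false] :=
    rigid_inv (Pq_rigid σ0 (show σ0 (quadIdx true false) = quadIdx false true by decide))
  have s3 : Rigid (Pq σ0) [true,false,true] [false,true,true] := by
    simpa using rigid_extend
      (Pq_rigid σ0 (show σ0 (quadIdx true false) = quadIdx false true by decide)) [true]
  exact rigid_mul s1 (rigid_mul Ael_rigid_10 s3)

theorem Mel_rigid_10 : Rigid Mel [true,false] [true,false] := by
  have s1 : Rigid (Pq σ0)⁻¹ [true,false] [false,false] :=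
    rigid_inv (Pq_rigid σ0 (show σ0 (quadIdx false false) = quadIdx true false by decide))
  exact rigid_mul s1 (rigid_mul Ael_rigid_00
    (Pq_rigid σ0 (show σ0 (quadIdx false false) = quadIdx true false by decide)))

theorem Mel_rigid_11 : Rigid Mel [true,true] [true,true] := by
  have s1 : Rigid (Pq σ0)⁻¹ [true,true] [true,true] :=
    rigid_inv (Pq_rigid σ0 (show σ0 (quadIdx true true) = quadIdx true true by decide))
  exact rigid_mul s1 (rigid_mul Ael_rigid_11
    (Pq_rigid σ0 (show σ0 (quadIdx true true) = quadIdx true true by decide)))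

theorem Mel_rigid_1 : Rigid Mel [true] [true] := by
  refine rigid_split ?_ ?_
  · simpa using Mel_rigid_10
  · simpa using Mel_rigid_11

theorem Mel_mem : Mel ∈ KV := mul_mem (mul_mem (Pq_mem σ0) Ael_mem) (inv_mem (Pq_mem σ0))

/-- The element `E₁ = σ₁ A σ₁⁻¹`, the copy of `X₀` supported on the cylinder `1`. -/
def E1el : Cantor ≃ₜ Cantor := Pq σ1 * Ael * (Pq σ1)⁻¹

theorem E1_rigid_100 : Rigid E1el [true,false,false] [true,false] := by
  have s1 : Rigid (Pq σ1)⁻¹ [true,false,false] [false,true,false] := by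
    simpa using rigid_extend
      (rigid_inv (Pq_rigid σ1 (show σ1 (quadIdx false true) = quadIdx true false by decide)))
      [false]
  exact rigid_mul s1 (rigid_mul Ael_rigid_010
    (Pq_rigid σ1 (show σ1 (quadIdx false true) = quadIdx true false by decide)))

theorem E1_rigid_101 : Rigid E1el [true,false,true] [true,true,false] := by
  have s1 : Rigid (Pq σ1)⁻¹ [true,false,true] [false,true,true] := by
    simpa using rigid_extend
      (rigid_inv (Pq_rigid σ1 (show σ1 (quadIdx false true) = quadIdx true false by decide)))
      [true]
  have s3 : Rigid (Pq σ1) [true,false,false] [true,true,false] := by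
    simpa using rigid_extend
      (Pq_rigid σ1 (show σ1 (quadIdx true false) = quadIdx true true by decide)) [false]
  exact rigid_mul s1 (rigid_mul Ael_rigid_011 s3)

theorem E1_rigid_11 : Rigid E1el [true,true] [true,true,true] := by
  have s1 : Rigid (Pq σ1)⁻¹ [true,true] [true,false] :=
    rigid_inv (Pq_rigid σ1 (show σ1 (quadIdx true false) = quadIdx true true by decide))
  have s3 : Rigid (Pq σ1) [true,false,true] [true,true,true] := by
    simpa using rigid_extend
      (Pq_rigid σ1 (show σ1 (quadIdx true false) = quadIdx true true by decide)) [true]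
  exact rigid_mul s1 (rigid_mul Ael_rigid_10 s3)

theorem E1_rigid_00 : Rigid E1el [false,false] [false,false] := by
  have s1 : Rigid (Pq σ1)⁻¹ [false,false] [false,false] :=
    rigid_inv (Pq_rigid σ1 (show σ1 (quadIdx false false) = quadIdx false false by decide))
  exact rigid_mul s1 (rigid_mul Ael_rigid_00
    (Pq_rigid σ1 (show σ1 (quadIdx false false) = quadIdx false false by decide)))

theorem E1_rigid_01 : Rigid E1el [false,true] [false,true] := by
  have s1 : Rigid (Pq σ1)⁻¹ [false,true] [true,true] :=
    rigid_inv (Pq_rigid σ1 (show σ1 (quadIdx true true) = quadIdx false true by decide))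
  exact rigid_mul s1 (rigid_mul Ael_rigid_11
    (Pq_rigid σ1 (show σ1 (quadIdx true true) = quadIdx false true by decide)))

theorem E1_rigid_0 : Rigid E1el [false] [false] := by
  refine rigid_split ?_ ?_
  · simpa using E1_rigid_00
  · simpa using E1_rigid_01

theorem E1_mem : E1el ∈ KV := mul_mem (mul_mem (Pq_mem σ1) Ael_mem) (inv_mem (Pq_mem σ1))

/-- Thompson's generator `X₀` as an element of `KV`. -/
def X0el : Cantor ≃ₜ Cantor := E1el * Ael * Mel

theorem X0el_rigid_000 : Rigid X0el [false,false,false] [false,false] := by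
  have s2 : Rigid Ael [false,false] [false,false] := Ael_rigid_00
  exact rigid_mul Mel_rigid_000 (rigid_mul s2 E1_rigid_00)

theorem X0el_rigid_001 : Rigid X0el [false,false,true] [false,true] :=
  rigid_mul Mel_rigid_001 (rigid_mul Ael_rigid_010 E1_rigid_01)

theorem X0el_rigid_00 : Rigid X0el [false,false] [false] := by
  refine rigid_split ?_ ?_
  · simpa using X0el_rigid_000
  · simpa using X0el_rigid_001

theorem X0el_rigid_01 : Rigid X0el [false,true] [true,false] :=
  rigid_mul Mel_rigid_01 (rigid_mul Ael_rigid_011 E1_rigid_100)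

theorem X0el_rigid_10 : Rigid X0el [true,false] [true,true,false] :=
  rigid_mul Mel_rigid_10 (rigid_mul Ael_rigid_10 E1_rigid_101)

theorem X0el_rigid_11 : Rigid X0el [true,true] [true,true,true] :=
  rigid_mul Mel_rigid_11 (rigid_mul Ael_rigid_11 E1_rigid_11)

theorem X0el_rigid_1 : Rigid X0el [true] [true,true] := by
  refine rigid_split ?_ ?_
  · simpa using X0el_rigid_10
  · simpa using X0el_rigid_11

theorem X0el_mem : X0el ∈ KV := mul_mem (mul_mem E1_mem Ael_mem) Mel_mem

/-- The element `h = X₀ M⁻¹`. -/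
def hel : Cantor ≃ₜ Cantor := X0el * Mel⁻¹

theorem hel_rigid_00 : Rigid hel [false,false] [false,false] := by
  have s1 : Rigid Mel⁻¹ [false,false] [false,false,false] := rigid_inv Mel_rigid_000
  have s2 : Rigid X0el [false,false,false] [false,false] := X0el_rigid_000
  exact rigid_mul s1 s2

theorem hel_rigid_010 : Rigid hel [false,true,false] [false,true] :=
  rigid_mul (rigid_inv Mel_rigid_001) X0el_rigid_001

theorem hel_rigid_011 : Rigid hel [false,true,true] [true,false] :=
  rigid_mul (rigid_inv Mel_rigid_01) X0el_rigid_01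

theorem hel_rigid_1 : Rigid hel [true] [true,true] :=
  rigid_mul (rigid_inv Mel_rigid_1) X0el_rigid_1

theorem hel_mem : hel ∈ KV := mul_mem X0el_mem (inv_mem Mel_mem)

/-- The element `F₁`, rigidly mapping the cylinder `00` to itself and `1` to `01`. -/
def F1el : Cantor ≃ₜ Cantor := Pq σp * Pq σf * X0el⁻¹ * Pq σf

theorem Pqf_rigid_1_0 : Rigid (Pq σf) [true] [false] := by
  refine rigid_split ?_ ?_
  · simpa using Pq_rigid σf (show σf (quadIdx true false) = quadIdx false false by decide)
  · simpa using Pq_rigid σf (show σf (quadIdx true true) = quadIdx false true by decide)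

theorem Pqf_rigid_0_1 : Rigid (Pq σf) [false] [true] := by
  refine rigid_split ?_ ?_
  · simpa using Pq_rigid σf (show σf (quadIdx false false) = quadIdx true false by decide)
  · simpa using Pq_rigid σf (show σf (quadIdx false true) = quadIdx true true by decide)

theorem F1_rigid_1 : Rigid F1el [true] [false,true] := by
  have s2 : Rigid X0el⁻¹ [false] [false,false] := rigid_inv X0el_rigid_00
  have s3 : Rigid (Pq σf) [false,false] [true,false] :=
    Pq_rigid σf (show σf (quadIdx false false) = quadIdx true false by decide)
  have s4 : Rigid (Pq σp) [true,false] [false,true] :=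
    Pq_rigid σp (show σp (quadIdx true false) = quadIdx false true by decide)
  exact rigid_mul Pqf_rigid_1_0 (rigid_mul s2 (rigid_mul s3 s4))

theorem F1_rigid_00 : Rigid F1el [false,false] [false,false] := by
  have s1 : Rigid (Pq σf) [false,false] [true,false] :=
    Pq_rigid σf (show σf (quadIdx false false) = quadIdx true false by decide)
  have s2 : Rigid X0el⁻¹ [true,false] [false,true] := rigid_inv X0el_rigid_01
  have s3 : Rigid (Pq σf) [false,true] [true,true] :=
    Pq_rigid σf (show σf (quadIdx false true) = quadIdx true true by decide)
  have s4 : Rigid (Pq σp) [true,true] [false,false] :=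
    Pq_rigid σp (show σp (quadIdx true true) = quadIdx false false by decide)
  exact rigid_mul s1 (rigid_mul s2 (rigid_mul s3 s4))

theorem F1_mem : F1el ∈ KV :=
  mul_mem (mul_mem (mul_mem (Pq_mem σp) (Pq_mem σf)) (inv_mem X0el_mem)) (Pq_mem σf)

end CompositeElements

noncomputable section BaseSwaps

open TV

theorem decomp1 (ξ : Cantor) : wordAppend [ξ 0] (dropC 1 ξ) = ξ := by
  funext n
  match n with
  | 0 => simp [wordAppend]
  | n+1 => simp [wordAppend, dropC]

theorem decomp2 (ξ : Cantor) : wordAppend [ξ 0, ξ 1] (dropC 2 ξ) = ξ := by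
  funext n
  match n with
  | 0 => simp [wordAppend]
  | 1 => simp [wordAppend]
  | n+2 => simp [wordAppend, dropC]

/-- The depth-2 word attached to an index in `Fin 4`. -/
def wrd (x : Fin 4) : List Bool := [quadHi x, quadLo x]

theorem quadIdx_quad (i : Fin 4) : quadIdx (quadHi i) (quadLo i) = i := by
  fin_cases i <;> rfl

theorem wrd_inj {x y : Fin 4} (h : wrd x = wrd y) : x = y := by
  rw [wrd, wrd] at h
  have h1 : quadHi x = quadHi y := by injection h
  have h2 : quadLo x = quadLo y := by
    injection h with _ h'
    injection h'
  rw [← quadIdx_quad x, h1, h2, quadIdx_quad]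

theorem wrd_incomp {x y : Fin 4} (h : x ≠ y) : Incomp (wrd x) (wrd y) :=
  incomp_of_ne_same_length rfl (fun he => h (wrd_inj he))

theorem wrd_quadIdx (b0 b1 : Bool) : wrd (quadIdx b0 b1) = [b0, b1] := by
  rw [wrd, quadHi_quadIdx, quadLo_quadIdx]

theorem Pq_word' (σ : Equiv.Perm (Fin 4)) (b0 b1 : Bool) (ζ : Cantor) :
    Pq σ (wordAppend [b0, b1] ζ) = wordAppend (wrd (σ (quadIdx b0 b1))) ζ := by
  rw [Pq_word, wrd]

theorem swH_eq_Pq_swap {x y : Fin 4} (h : x ≠ y) (hI : Incomp (wrd x) (wrd y)) :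
    swH (wrd x) (wrd y) hI = Pq (Equiv.swap x y) := by
  apply Homeomorph.ext
  intro ξ
  obtain ⟨b0, b1, ζ, rfl⟩ : ∃ b0 b1 ζ, ξ = wordAppend [b0, b1] ζ :=
    ⟨ξ 0, ξ 1, dropC 2 ξ, (decomp2 ξ).symm⟩
  rw [Pq_word', swH_apply]
  rw [show ([b0, b1] : List Bool) = wrd (quadIdx b0 b1) from (wrd_quadIdx b0 b1).symm]
  set j := quadIdx b0 b1 with hj
  by_cases hx : j = x
  · rw [hx, swFun_left, Equiv.swap_apply_left]
  · by_cases hy : j = y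
    · rw [hy, swFun_right hI, Equiv.swap_apply_right]
    · rw [swFun_fix (not_hasPref_of_incomp (wrd_incomp (fun he => hx he.symm)) ζ)
        (not_hasPref_of_incomp (wrd_incomp (fun he => hy he.symm)) ζ),
        Equiv.swap_apply_of_ne_of_ne hx hy]

theorem incomp_0_1 : Incomp [false] [true] := incomp_cons_of_ne (by decide) [] []

theorem swH01_eq_Pqf (hI : Incomp [false] [true]) : swH [false] [true] hI = Pq σf := by
  apply Homeomorph.ext
  intro ξ
  obtain ⟨b, ζ, rfl⟩ : ∃ b ζ, ξ = wordAppend [b] ζ := ⟨ξ 0, dropC 1 ξ, (decomp1 ξ).symm⟩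
  cases b
  · rw [swH_apply, swFun_left, Pqf_rigid_0_1 ζ]
  · rw [swH_apply, swFun_right hI, Pqf_rigid_1_0 ζ]

theorem wrd_swH_mem {x y : Fin 4} (h : x ≠ y) (hI : Incomp (wrd x) (wrd y)) :
    swH (wrd x) (wrd y) hI ∈ KV := by
  rw [swH_eq_Pq_swap h]; exact Pq_mem _

theorem swH01_mem (hI : Incomp [false] [true]) : swH [false] [true] hI ∈ KV := by
  rw [swH01_eq_Pqf]; exact Pq_mem _

theorem sw010_011_mem (hI : Incomp [false,true,false] [false,true,true]) :
    swH [false,true,false] [false,true,true] hI ∈ KV := by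
  refine swH_mem_of_conj hI (wrd_incomp (show (1 : Fin 4) ≠ 2 by decide))
    hel_rigid_010 hel_rigid_011 hel_mem ?_
  exact wrd_swH_mem (x := 1) (y := 2) (by decide) _

theorem sw000_001_mem (hI : Incomp [false,false,false] [false,false,true]) :
    swH [false,false,false] [false,false,true] hI ∈ KV := by
  refine swH_mem_of_conj hI (incomp_of_ne_same_length
      (u := [false,true,false]) (v := [false,true,true]) rfl (by decide)) ?_ ?_
    (Pq_mem σd) (sw010_011_mem _)
  · simpa using rigid_extend
      (Pq_rigid σd (show σd (quadIdx false false) = quadIdx false true by decide)) [false]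
  · simpa using rigid_extend
      (Pq_rigid σd (show σd (quadIdx false false) = quadIdx false true by decide)) [true]

theorem Pqd_rigid_1 : Rigid (Pq σd) [true] [true] := by
  refine rigid_split ?_ ?_
  · simpa using Pq_rigid σd (show σd (quadIdx true false) = quadIdx true false by decide)
  · simpa using Pq_rigid σd (show σd (quadIdx true true) = quadIdx true true by decide)

theorem sw00_1_mem (hI : Incomp [false,false] [true]) :
    swH [false,false] [true] hI ∈ KV := by
  refine swH_mem_of_conj hI (wrd_incomp (show (0 : Fin 4) ≠ 1 by decide))
    F1_rigid_00 F1_rigid_1 F1_mem ?_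
  exact wrd_swH_mem (x := 0) (y := 1) (by decide) _

theorem sw01_1_mem (hI : Incomp [false,true] [true]) :
    swH [false,true] [true] hI ∈ KV := by
  refine swH_mem_of_conj hI (incomp_cons_of_ne (by decide) [false] []) ?_ Pqd_rigid_1
    (Pq_mem σd) (sw00_1_mem _)
  exact Pq_rigid σd (show σd (quadIdx false true) = quadIdx false false by decide)

end BaseSwaps

noncomputable section AllSwaps

open TV

theorem rigid_swH_left {u v : List Bool} (hI : Incomp u v) (t : List Bool) :
    Rigid (swH u v hI) (u ++ t) (v ++ t) := by
  intro ζ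
  rw [wordAppend_append, wordAppend_append, swH_apply, swFun_left]

theorem rigid_swH_right {u v : List Bool} (hI : Incomp u v) (t : List Bool) :
    Rigid (swH u v hI) (v ++ t) (u ++ t) := by
  intro ζ
  rw [wordAppend_append, wordAppend_append, swH_apply, swFun_right hI]

theorem quadIdx_ff : quadIdx false false = 0 := rfl
theorem quadIdx_ft : quadIdx false true = 1 := rfl

/-- A permutation of `Fin 4` sending `x` to `0` and `y` to `1`. -/
def twoPerm (x y : Fin 4) : Equiv.Perm (Fin 4) :=
  (Equiv.swap x 0).trans (Equiv.swap (Equiv.swap x 0 y) 1)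

theorem twoPerm_x {x y : Fin 4} (h : x ≠ y) : twoPerm x y x = 0 := by
  have h1 : Equiv.swap x 0 y ≠ 0 := by
    intro he
    apply h
    have h2 : Equiv.swap x 0 y = Equiv.swap x 0 x := by rw [he, Equiv.swap_apply_left]
    exact ((Equiv.swap x 0).injective h2).symm
  show Equiv.swap (Equiv.swap x 0 y) 1 (Equiv.swap x 0 x) = 0
  rw [Equiv.swap_apply_left]
  exact Equiv.swap_apply_of_ne_of_ne (fun he => h1 he.symm) (by decide)

theorem twoPerm_y {x y : Fin 4} (h : x ≠ y) : twoPerm x y y = 1 := by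
  show Equiv.swap (Equiv.swap x 0 y) 1 (Equiv.swap x 0 y) = 1
  rw [Equiv.swap_apply_left]

/-- Swaps `s_{u,1}` with `u` inside the cylinder `0` lie in `KV`. -/
theorem swT_mem : ∀ N u (hI : Incomp u [true]), u.length ≤ N → swH u [true] hI ∈ KV := by
  intro N
  induction N with
  | zero =>
    intro u hI hlen
    obtain ⟨u₀, a, rfl⟩ := List.exists_cons_of_ne_nil hI.ne_nil
    simp at hlen
  | succ N ih =>
    intro u hI hlen
    obtain ⟨u₀, a, rfl⟩ := List.exists_cons_of_ne_nil hI.ne_nil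
    have hu0 : u₀ = false := by
      cases u₀
      · rfl
      · exact absurd ⟨a, rfl⟩ hI.2
    subst hu0
    rcases a with _ | ⟨c, _ | ⟨e, a₃⟩⟩
    · exact swH01_mem hI
    · cases c
      · exact sw00_1_mem hI
      · exact sw01_1_mem hI
    · -- u = false :: c :: e :: a₃
      have hg₁ : ∃ g₁ ∈ KV, Rigid g₁ (false::c::e::a₃) (false::false::e::a₃) ∧
          Rigid g₁ [true] [true] := by
        cases c
        · exact ⟨1, one_mem _, rigid_one _, rigid_one _⟩
        · refine ⟨Pq σd, Pq_mem _, ?_, Pqd_rigid_1⟩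
          simpa using rigid_extend (Pq_rigid σd
            (show σd (quadIdx false true) = quadIdx false false by decide)) (e::a₃)
      have hJI : Incomp [false,false,false] [false,false,true] :=
        incomp_of_ne_same_length rfl (by decide)
      have hg₂ : ∃ g₂ ∈ KV, Rigid g₂ (false::false::e::a₃) (false::false::false::a₃) ∧
          Rigid g₂ [true] [true] := by
        cases e
        · exact ⟨1, one_mem _, rigid_one _, rigid_one _⟩
        · refine ⟨swH _ _ hJI, sw000_001_mem _, ?_, ?_⟩
          · simpa using rigid_swH_right hJI a₃
          · exact rigid_swH_self hJI (incomp_cons_of_ne (by decide) [] [false,false])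
              (incomp_cons_of_ne (by decide) [] [false,true])
      obtain ⟨g₁, hg₁m, hg₁u, hg₁t⟩ := hg₁
      obtain ⟨g₂, hg₂m, hg₂u, hg₂t⟩ := hg₂
      have hMu : Rigid Mel (false::false::false::a₃) (false::false::a₃) := by
        simpa using rigid_extend Mel_rigid_000 a₃
      have hI' : Incomp (false::false::a₃) [true] :=
        incomp_cons_of_ne (by decide) (false::a₃) []
      refine swH_mem_of_conj hI hI'
        (rigid_mul hg₁u (rigid_mul hg₂u hMu))
        (rigid_mul hg₁t (rigid_mul hg₂t Mel_rigid_1))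
        (mul_mem (mul_mem Mel_mem hg₂m) hg₁m)
        (ih _ hI' (by simp at hlen ⊢; omega))

theorem swF_mem (u : List Bool) (hI : Incomp u [false]) : swH u [false] hI ∈ KV := by
  obtain ⟨u₀, a, rfl⟩ := List.exists_cons_of_ne_nil hI.ne_nil
  have hu0 : u₀ = true := by
    cases u₀
    · exact absurd ⟨a, rfl⟩ hI.2
    · rfl
  subst hu0
  rcases a with _ | ⟨d, u₂⟩
  · rw [swH_comm]
    exact swH01_mem _
  · have hI' : Incomp (false::d::u₂) [true] := incomp_cons_of_ne (by decide) (d::u₂) []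
    refine swH_mem_of_conj hI hI' ?_ Pqf_rigid_0_1 (Pq_mem σf)
      (swT_mem (false::d::u₂).length _ hI' (le_refl _))
    simpa using rigid_extend (Pq_rigid σf
      (show σf (quadIdx true d) = quadIdx false d by cases d <;> decide)) u₂

/-- All swaps of incomparable cylinders lie in `KV`. -/
theorem swaps_mem_aux : ∀ N u v (hI : Incomp u v), u.length + v.length ≤ N →
    swH u v hI ∈ KV := by
  intro N
  induction N with
  | zero =>
    intro u v hI hlen
    obtain ⟨u₀, a, rfl⟩ := List.exists_cons_of_ne_nil hI.ne_nil
    simp at hlen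
  | succ N ih =>
    intro u v hI hlen
    obtain ⟨v₀, b, rfl⟩ := List.exists_cons_of_ne_nil hI.ne_nil'
    rcases b with _ | ⟨v₁, b'⟩
    · cases v₀
      · exact swF_mem u hI
      · exact swT_mem u.length u hI (le_refl _)
    · obtain ⟨u₀, a, rfl⟩ := List.exists_cons_of_ne_nil hI.ne_nil
      rcases a with _ | ⟨u₁, a'⟩
      · rw [swH_comm]
        cases u₀
        · exact swF_mem _ hI.symm
        · exact swT_mem (v₀::v₁::b').length _ hI.symm (le_refl _)
      · by_cases hxy : quadIdx u₀ u₁ = quadIdx v₀ v₁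
        · obtain ⟨h0, h1⟩ := quadIdx_inj hxy
          subst h0; subst h1
          have hPu : Rigid (Pq (Equiv.swap (quadIdx u₀ u₁) 0)) [u₀,u₁] [false,false] :=
            Pq_rigid _ (by rw [← quadIdx_ff]; exact Equiv.swap_apply_left _ _)
          have hu : Rigid (X0el * Pq (Equiv.swap (quadIdx u₀ u₁) 0))
              (u₀::u₁::a') (false::a') := by
            have h1 := rigid_extend hPu a'
            have h2 := rigid_extend X0el_rigid_00 a'
            simpa using rigid_mul (show Rigid _ (u₀::u₁::a') ([false,false]++a')
              by simpa using h1) h2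
          have hv : Rigid (X0el * Pq (Equiv.swap (quadIdx u₀ u₁) 0))
              (u₀::u₁::b') (false::b') := by
            have h1 := rigid_extend hPu b'
            have h2 := rigid_extend X0el_rigid_00 b'
            simpa using rigid_mul (show Rigid _ (u₀::u₁::b') ([false,false]++b')
              by simpa using h1) h2
          have hI' : Incomp (false::a') (false::b') := by
            rw [incomp_cons_iff]
            exact (incomp_cons_iff.1 (incomp_cons_iff.1 hI))
          refine swH_mem_of_conj hI hI' hu hv (mul_mem X0el_mem (Pq_mem _))
            (ih _ _ hI' (by simp at hlen ⊢; omega))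
        · set σ := twoPerm (quadIdx u₀ u₁) (quadIdx v₀ v₁) with hσ
          have hPu : Rigid (Pq σ) [u₀,u₁] [false,false] :=
            Pq_rigid _ (by rw [hσ, twoPerm_x hxy]; rfl)
          have hPv : Rigid (Pq σ) [v₀,v₁] [false,true] :=
            Pq_rigid _ (by rw [hσ, twoPerm_y hxy]; rfl)
          have hu : Rigid (X0el * Pq σ) (u₀::u₁::a') (false::a') := by
            have h1 := rigid_extend hPu a'
            have h2 := rigid_extend X0el_rigid_00 a'
            simpa using rigid_mul (show Rigid _ (u₀::u₁::a') ([false,false]++a')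
              by simpa using h1) h2
          have hv : Rigid (X0el * Pq σ) (v₀::v₁::b') (true::false::b') := by
            have h1 := rigid_extend hPv b'
            have h2 := rigid_extend X0el_rigid_01 b'
            simpa using rigid_mul (show Rigid _ (v₀::v₁::b') ([false,true]++b')
              by simpa using h1) h2
          have hI' : Incomp (false::a') (true::false::b') :=
            incomp_cons_of_ne (by decide) a' (false::b')
          refine swH_mem_of_conj hI hI' hu hv (mul_mem X0el_mem (Pq_mem _))
            (ih _ _ hI' (by simp at hlen ⊢; omega))

theorem swaps_mem {u v : List Bool} (hI : Incomp u v) : swH u v hI ∈ KV :=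
  swaps_mem_aux (u.length + v.length) u v hI (le_refl _)

end AllSwaps

noncomputable section PartitionLemmas

theorem partition_incomp {A : Finset (List Bool)} (hA : IsDyadicPartition A)
    {w₁ w₂ : List Bool} (h1 : w₁ ∈ A) (h2 : w₂ ∈ A) (hne : w₁ ≠ w₂) : Incomp w₁ w₂ := by
  constructor
  · intro hp
    obtain ⟨w, _, huniq⟩ := hA (wordAppend w₂ (fun _ => false))
    have e2 : w₂ = w := huniq w₂ ⟨h2, _, rfl⟩
    have e1 : w₁ = w := huniq w₁ ⟨h1,
      exists_of_hasPref (hasPref_of_prefix hp (hasPref_wordAppend _ _))⟩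
    exact hne (e1.trans e2.symm)
  · intro hp
    obtain ⟨w, _, huniq⟩ := hA (wordAppend w₁ (fun _ => false))
    have e1 : w₁ = w := huniq w₁ ⟨h1, _, rfl⟩
    have e2 : w₂ = w := huniq w₂ ⟨h2,
      exists_of_hasPref (hasPref_of_prefix hp (hasPref_wordAppend _ _))⟩
    exact hne (e1.trans e2.symm)

theorem partition_nonempty {A : Finset (List Bool)} (hA : IsDyadicPartition A) :
    A.Nonempty := by
  obtain ⟨w, ⟨hw, _⟩, _⟩ := hA (fun _ => false)
  exact ⟨w, hw⟩

theorem partition_not_mem_of_sib {A : Finset (List Bool)} (hA : IsDyadicPartition A)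
    {p : List Bool} (hp0 : p ++ [false] ∈ A) : p ∉ A := by
  intro hpA
  have hne : p ≠ p ++ [false] := by simp
  exact (partition_incomp hA hpA hp0 hne).1 ⟨[false], rfl⟩

theorem partition_card_one {A : Finset (List Bool)} (hA : IsDyadicPartition A)
    (hc : A.card = 1) : A = {[]} := by
  obtain ⟨w, rfl⟩ := Finset.card_eq_one.1 hc
  cases w with
  | nil => rfl
  | cons c w' =>
    exfalso
    obtain ⟨w₂, ⟨hw₂, ζ, hζ⟩, _⟩ := hA (fun _ => !c)
    rw [Finset.mem_singleton] at hw₂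
    subst hw₂
    have h0 := congrFun hζ 0
    have : wordAppend (c :: w') ζ 0 = c := by simp [wordAppend]
    rw [this] at h0
    exact (by cases c <;> simp at h0 : False)

theorem partition_sibling {A : Finset (List Bool)} (hA : IsDyadicPartition A)
    (hc : 2 ≤ A.card) : ∃ p, p ++ [false] ∈ A ∧ p ++ [true] ∈ A := by
  obtain ⟨w, hwA, hmax⟩ := A.exists_max_image List.length (partition_nonempty hA)
  have hwne : w ≠ [] := by
    rintro rfl
    obtain ⟨u, huA, hune⟩ := Finset.exists_mem_ne (s := A) (by omega) []
    exact (partition_incomp hA huA hwA hune).2 List.nil_prefix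
  obtain ⟨p, c, hw⟩ : ∃ p c, p ++ [c] = w :=
    ⟨w.dropLast, w.getLast hwne, List.dropLast_append_getLast hwne⟩
  -- show the sibling is in A
  have hsib : p ++ [!c] ∈ A := by
    set s := p ++ [!c] with hs
    obtain ⟨w', ⟨hw'A, ζ', hζ'⟩, _⟩ := hA (wordAppend s (fun _ => false))
    have hpref : hasPref w' (wordAppend s (fun _ => false)) := by
      rw [← hζ']; exact hasPref_wordAppend _ _
    have hlen' : w'.length ≤ w.length := hmax w' hw'A
    have hslen : s.length = w.length := by
      rw [hs, ← hw]; simp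
    have hple : w' <+: s :=
      prefix_of_hasPref_le hpref (hasPref_wordAppend s _) (by omega)
    by_cases hcase : w'.length = s.length
    · rwa [← List.IsPrefix.eq_of_length hple hcase]
    · exfalso
      -- w' is a strict prefix of s, hence a prefix of p, hence of w
      have hlt : w'.length < s.length := lt_of_le_of_ne (by omega) hcase
      have hpp : p <+: s := ⟨[!c], rfl⟩
      have hw'p : w' <+: p := by
        rcases List.prefix_or_prefix_of_prefix hple hpp with h | h
        · exact h
        · have hle2 : p.length ≤ w'.length := h.length_le
          have hplen : p.length + 1 = s.length := by simp [hs]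
          have hpe : p = w' := List.IsPrefix.eq_of_length h (by omega)
          rw [← hpe]
      have hw'w : w' <+: w := by
        rw [← hw]; exact hw'p.trans ⟨[c], rfl⟩
      have hne : w' ≠ w := by
        intro he; rw [he] at hlt; omega
      exact (partition_incomp hA hw'A hwA hne).1 hw'w
  have hwA' : p ++ [c] ∈ A := by rw [hw]; exact hwA
  cases c
  · exact ⟨p, hwA', by simpa using hsib⟩
  · exact ⟨p, by simpa using hsib, hwA'⟩

/-- Merging a sibling pair in a dyadic partition. -/
theorem partition_merge {A : Finset (List Bool)} (hA : IsDyadicPartition A)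
    {p : List Bool} (hp0 : p ++ [false] ∈ A) (hp1 : p ++ [true] ∈ A) :
    IsDyadicPartition (insert p ((A.erase (p ++ [false])).erase (p ++ [true]))) := by
  intro ξ
  set A' := insert p ((A.erase (p ++ [false])).erase (p ++ [true])) with hA'
  obtain ⟨w, ⟨hwA, ζ, hζ⟩, huniq⟩ := hA ξ
  have key : ∀ y, y ∈ A' → (∃ ζ', wordAppend y ζ' = ξ) →
      (y = p ∧ (w = p ++ [false] ∨ w = p ++ [true])) ∨ y = w := by
    intro y hyA' ⟨ζ', hζ'⟩
    rcases Finset.mem_insert.1 hyA' with hy | hy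
    · subst hy
      left
      refine ⟨rfl, ?_⟩
      have hmem : y ++ [ζ' 0] ∈ A := by
        cases ζ' 0
        · exact hp0
        · exact hp1
      have : y ++ [ζ' 0] = w := huniq _ ⟨hmem, shiftC ζ', by rw [wordAppend_eta, hζ']⟩
      rw [← this]
      cases ζ' 0
      · left; rfl
      · right; rfl
    · right
      exact huniq y ⟨Finset.mem_of_mem_erase (Finset.mem_of_mem_erase hy), ζ', hζ'⟩
  by_cases hw : w = p ++ [false] ∨ w = p ++ [true]
  · refine ⟨p, ⟨Finset.mem_insert_self _ _, ?_⟩, ?_⟩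
    · rcases hw with hw | hw
      · exact ⟨consC false ζ, by rw [← wordAppend_concat, ← hw, hζ]⟩
      · exact ⟨consC true ζ, by rw [← wordAppend_concat, ← hw, hζ]⟩
    · intro y ⟨hyA', hyζ⟩
      rcases key y hyA' hyζ with ⟨h, _⟩ | h
      · exact h
      · exfalso
        subst h
        rcases Finset.mem_insert.1 hyA' with hy | hy
        · -- y = p but y = w = p ++ [b], contradiction by length
          rcases hw with hw | hw <;> (rw [hw] at hy; simp at hy)
        · rcases hw with hw | hw
          · exact (Finset.mem_erase.1 (Finset.mem_erase.1 hy).2).1 hw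
          · exact (Finset.mem_erase.1 hy).1 hw
  · push_neg at hw
    refine ⟨w, ⟨?_, ζ, hζ⟩, ?_⟩
    · exact Finset.mem_insert_of_mem (Finset.mem_erase.2 ⟨hw.2, Finset.mem_erase.2 ⟨hw.1, hwA⟩⟩)
    · intro y ⟨hyA', hyζ⟩
      rcases key y hyA' hyζ with ⟨_, hc⟩ | h
      · exact absurd hc (by push_neg; exact hw)
      · exact h

theorem partition_merge_card {A : Finset (List Bool)} (hA : IsDyadicPartition A)
    {p : List Bool} (hp0 : p ++ [false] ∈ A) (hp1 : p ++ [true] ∈ A) :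
    A.card = (insert p ((A.erase (p ++ [false])).erase (p ++ [true]))).card + 1 := by
  have hne : p ++ [true] ≠ p ++ [false] := by simp
  have hpnm : p ∉ (A.erase (p ++ [false])).erase (p ++ [true]) := by
    intro h
    exact partition_not_mem_of_sib hA hp0 (Finset.mem_of_mem_erase (Finset.mem_of_mem_erase h))
  rw [Finset.card_insert_of_notMem hpnm, Finset.card_erase_of_mem
    (Finset.mem_erase.2 ⟨hne, hp1⟩), Finset.card_erase_of_mem hp0]
  have h2 : 2 ≤ A.card := Finset.one_lt_card.2 ⟨_, hp0, _, hp1, fun h => (by simp at h)⟩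
  omega

end PartitionLemmas

noncomputable section VDecomposition

/-- Swap of two values, at the level of words. -/
def swpL (a b w : List Bool) : List Bool := if w = a then b else if w = b then a else w

theorem swpL_invol (a b w : List Bool) : swpL a b (swpL a b w) = w := by
  unfold swpL
  split_ifs <;> simp_all

theorem swpL_mem {B : Finset (List Bool)} {a b : List Bool} (ha : a ∈ B) (hb : b ∈ B)
    {w : List Bool} (hw : w ∈ B) : swpL a b w ∈ B := by
  unfold swpL; split_ifs <;> assumption

theorem swpL_bijOn {B : Finset (List Bool)} {a b : List Bool} (ha : a ∈ B) (hb : b ∈ B) :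
    Set.BijOn (swpL a b) ↑B ↑B := by
  refine ⟨fun w hw => Finset.mem_coe.2 (swpL_mem ha hb (Finset.mem_coe.1 hw)), ?_, ?_⟩
  · exact (Function.Involutive.injective (swpL_invol a b)).injOn
  · intro w hw
    exact ⟨swpL a b w, Finset.mem_coe.2 (swpL_mem ha hb (Finset.mem_coe.1 hw)),
      swpL_invol a b w⟩

theorem swp_homeo {B : Finset (List Bool)} (hB : IsDyadicPartition B)
    {a b : List Bool} (ha : a ∈ B) (hb : b ∈ B) :
    ∃ τ ∈ KV, ∀ w ∈ B, ∀ ζ, τ (wordAppend w ζ) = wordAppend (swpL a b w) ζ := by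
  by_cases hab : a = b
  · refine ⟨1, one_mem _, ?_⟩
    intro w hw ζ
    rw [homeo_one_apply]
    congr 1
    subst hab
    unfold swpL
    split_ifs with h1 h2 <;> simp_all
  · have hI : Incomp a b := partition_incomp hB ha hb hab
    refine ⟨swH a b hI, swaps_mem hI, ?_⟩
    intro w hw ζ
    by_cases h1 : w = a
    · subst h1
      rw [swH_apply, swFun_left]
      unfold swpL; rw [if_pos rfl]
    · by_cases h2 : w = b
      · subst h2
        rw [swH_apply, swFun_right hI]
        unfold swpL; rw [if_neg (fun h => hab h.symm), if_pos rfl]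
      · rw [rigid_swH_self hI (partition_incomp hB hw ha h1) (partition_incomp hB hw hb h2) ζ]
        unfold swpL; rw [if_neg h1, if_neg h2]

theorem vmap_mem_aux : ∀ k (γ : Cantor ≃ₜ Cantor) (A B : Finset (List Bool))
    (fmap : List Bool → List Bool), IsDyadicPartition A → IsDyadicPartition B →
    A.card = B.card → Set.BijOn fmap ↑A ↑B →
    (∀ w ∈ A, ∀ ζ, γ (wordAppend w ζ) = wordAppend (fmap w) ζ) →
    A.card ≤ k → γ ∈ KV := by
  intro k
  induction k with
  | zero =>
    intro γ A B fmap hA hB hcard hbij hγ hk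
    obtain ⟨w, hw⟩ := partition_nonempty hA
    have := Finset.card_pos.2 ⟨w, hw⟩
    omega
  | succ k ih =>
    intro γ A B fmap hA hB hcard hbij hγ hk
    by_cases hc1 : A.card = 1
    · have hA1 : A = {[]} := partition_card_one hA hc1
      have hB1 : B = {[]} := partition_card_one hB (by omega)
      have hf : fmap [] = [] := by
        have h := hbij.mapsTo (Finset.mem_coe.2 (show ([] : List Bool) ∈ A by rw [hA1]; simp))
        rw [hB1] at h
        simpa using h
      have hγ1 : γ = 1 := by
        apply Homeomorph.ext
        intro ξ
        have h := hγ [] (by rw [hA1]; simp) ξ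
        rw [wordAppend_nil, hf, wordAppend_nil] at h
        rw [h]; rfl
      rw [hγ1]; exact one_mem _
    · have hc2 : 2 ≤ A.card := by
        have := Finset.card_pos.2 (partition_nonempty hA); omega
      obtain ⟨p, hp0, hp1⟩ := partition_sibling hA hc2
      obtain ⟨q, hq0, hq1⟩ := partition_sibling hB (by omega)
      have hxB : fmap (p ++ [false]) ∈ B := Finset.mem_coe.1 (hbij.mapsTo (Finset.mem_coe.2 hp0))
      have hyB : fmap (p ++ [true]) ∈ B := Finset.mem_coe.1 (hbij.mapsTo (Finset.mem_coe.2 hp1))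
      set x := fmap (p ++ [false]) with hxdef
      set y := fmap (p ++ [true]) with hydef
      have hxy : x ≠ y := by
        intro h
        have := hbij.injOn (Finset.mem_coe.2 hp0) (Finset.mem_coe.2 hp1) h
        simp at this
      obtain ⟨τ₁, hτ₁K, hτ₁⟩ := swp_homeo hB hxB hq0
      set t₁ := swpL x (q ++ [false]) with ht₁def
      set y₁ := t₁ y with hy₁def
      have hy₁B : y₁ ∈ B := swpL_mem hxB hq0 hyB
      have hy₁ne : y₁ ≠ q ++ [false] := by
        rw [hy₁def, ht₁def]
        unfold swpL
        split_ifs with h1 h2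
        · exact absurd h1.symm hxy
        · intro he
          exact hxy (he ▸ h2).symm
        · exact h2
      obtain ⟨τ₂, hτ₂K, hτ₂⟩ := swp_homeo hB hy₁B hq1
      set t₂ := swpL y₁ (q ++ [true]) with ht₂def
      set γ₂ := τ₂ * (τ₁ * γ) with hγ₂def
      set f₂ := fun w => t₂ (t₁ (fmap w)) with hf₂def
      have hγ₂ : ∀ w ∈ A, ∀ ζ, γ₂ (wordAppend w ζ) = wordAppend (f₂ w) ζ := by
        intro w hw ζ
        have hfwB : fmap w ∈ B := Finset.mem_coe.1 (hbij.mapsTo (Finset.mem_coe.2 hw))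
        rw [hγ₂def, homeo_mul_apply, homeo_mul_apply, hγ w hw, hτ₁ _ hfwB,
          hτ₂ _ (swpL_mem hxB hq0 hfwB)]
      have hbij₂ : Set.BijOn f₂ ↑A ↑B :=
        ((swpL_bijOn hy₁B hq1).comp ((swpL_bijOn hxB hq0).comp hbij))
      have hf₂0 : f₂ (p ++ [false]) = q ++ [false] := by
        rw [hf₂def]
        show t₂ (t₁ x) = q ++ [false]
        have h1 : t₁ x = q ++ [false] := by rw [ht₁def]; unfold swpL; rw [if_pos rfl]
        rw [h1, ht₂def]
        unfold swpL
        rw [if_neg (fun h => hy₁ne h.symm), if_neg (by simp)]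
      have hf₂1 : f₂ (p ++ [true]) = q ++ [true] := by
        rw [hf₂def]
        show t₂ (t₁ y) = q ++ [true]
        rw [← hy₁def, ht₂def]
        unfold swpL
        rw [if_pos rfl]
      have hA'p := partition_merge hA hp0 hp1
      have hB'p := partition_merge hB hq0 hq1
      have hcA : A.card = (insert p ((A.erase (p ++ [false])).erase (p ++ [true]))).card + 1 :=
        partition_merge_card hA hp0 hp1
      have hcB : B.card = (insert q ((B.erase (q ++ [false])).erase (q ++ [true]))).card + 1 :=
        partition_merge_card hB hq0 hq1
      set A' := insert p ((A.erase (p ++ [false])).erase (p ++ [true])) with hA'def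
      set B' := insert q ((B.erase (q ++ [false])).erase (q ++ [true])) with hB'def
      have hpA : p ∉ A := partition_not_mem_of_sib hA hp0
      have hqB : q ∉ B := partition_not_mem_of_sib hB hq0
      set f₃ := fun w => if w = p then q else f₂ w with hf₃def
      have hsubA : ∀ w ∈ A', w ≠ p → w ∈ A ∧ w ≠ p ++ [false] ∧ w ≠ p ++ [true] := by
        intro w hw hne
        rcases Finset.mem_insert.1 hw with h | h
        · exact absurd h hne
        · exact ⟨Finset.mem_of_mem_erase (Finset.mem_of_mem_erase h),
            (Finset.mem_erase.1 (Finset.mem_erase.1 h).2).1, (Finset.mem_erase.1 h).1⟩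
      have hbij₃ : Set.BijOn f₃ ↑A' ↑B' := by
        refine ⟨?_, ?_, ?_⟩
        · intro w hw
          by_cases hwp : w = p
          · rw [hf₃def]
            simp only [hwp, if_pos rfl]
            exact Finset.mem_coe.2 (Finset.mem_insert_self _ _)
          · obtain ⟨hwA, hw0, hw1⟩ := hsubA w (Finset.mem_coe.1 hw) hwp
            have hfwB : f₂ w ∈ B := Finset.mem_coe.1 (hbij₂.mapsTo (Finset.mem_coe.2 hwA))
            have h0 : f₂ w ≠ q ++ [false] := by
              intro he
              exact hw0 (hbij₂.injOn (Finset.mem_coe.2 hwA) (Finset.mem_coe.2 hp0)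
                (he.trans hf₂0.symm))
            have h1 : f₂ w ≠ q ++ [true] := by
              intro he
              exact hw1 (hbij₂.injOn (Finset.mem_coe.2 hwA) (Finset.mem_coe.2 hp1)
                (he.trans hf₂1.symm))
            rw [hf₃def]
            simp only [if_neg hwp]
            exact Finset.mem_coe.2 (Finset.mem_insert_of_mem
              (Finset.mem_erase.2 ⟨h1, Finset.mem_erase.2 ⟨h0, hfwB⟩⟩))
        · intro w₁ hw₁ w₂ hw₂ he
          rw [hf₃def] at he
          by_cases h1 : w₁ = p <;> by_cases h2 : w₂ = p
          · rw [h1, h2]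
          · exfalso
            simp only [if_pos h1, if_neg h2] at he
            obtain ⟨hw₂A, _, _⟩ := hsubA w₂ (Finset.mem_coe.1 hw₂) h2
            exact hqB (he ▸ Finset.mem_coe.1 (hbij₂.mapsTo (Finset.mem_coe.2 hw₂A)))
          · exfalso
            simp only [if_neg h1, if_pos h2] at he
            obtain ⟨hw₁A, _, _⟩ := hsubA w₁ (Finset.mem_coe.1 hw₁) h1
            exact hqB (he ▸ Finset.mem_coe.1 (hbij₂.mapsTo (Finset.mem_coe.2 hw₁A)))
          · simp only [if_neg h1, if_neg h2] at he
            exact hbij₂.injOn (Finset.mem_coe.2 (hsubA w₁ (Finset.mem_coe.1 hw₁) h1).1)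
              (Finset.mem_coe.2 (hsubA w₂ (Finset.mem_coe.1 hw₂) h2).1) he
        · intro b hb
          rcases Finset.mem_insert.1 (Finset.mem_coe.1 hb) with h | h
          · refine ⟨p, Finset.mem_coe.2 (Finset.mem_insert_self _ _), ?_⟩
            rw [hf₃def]
            simp [h]
          · have hbB : b ∈ B := Finset.mem_of_mem_erase (Finset.mem_of_mem_erase h)
            have hb1 : b ≠ q ++ [true] := (Finset.mem_erase.1 h).1
            have hb0 : b ≠ q ++ [false] := (Finset.mem_erase.1 (Finset.mem_erase.1 h).2).1
            obtain ⟨w, hwA, hwe⟩ := hbij₂.surjOn (Finset.mem_coe.2 hbB)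
            have hwp : w ≠ p := fun he => hpA (he ▸ Finset.mem_coe.1 hwA)
            have hw0 : w ≠ p ++ [false] := fun he => hb0 (by rw [← hwe, he, hf₂0])
            have hw1 : w ≠ p ++ [true] := fun he => hb1 (by rw [← hwe, he, hf₂1])
            refine ⟨w, Finset.mem_coe.2 (Finset.mem_insert_of_mem (Finset.mem_erase.2
              ⟨hw1, Finset.mem_erase.2 ⟨hw0, Finset.mem_coe.1 hwA⟩⟩)), ?_⟩
            rw [hf₃def]
            simp only [if_neg hwp]
            exact hwe
      have hγ₃ : ∀ w ∈ A', ∀ ζ, γ₂ (wordAppend w ζ) = wordAppend (f₃ w) ζ := by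
        intro w hw ζ
        by_cases hwp : w = p
        · subst hwp
          have hf₃w : f₃ w = q := by rw [hf₃def]; simp
          rw [hf₃w, ← wordAppend_eta w ζ, ← wordAppend_eta q ζ]
          cases hb : ζ 0
          · rw [hγ₂ _ hp0 (shiftC ζ), hf₂0]
          · rw [hγ₂ _ hp1 (shiftC ζ), hf₂1]
        · obtain ⟨hwA, _, _⟩ := hsubA w hw hwp
          rw [hγ₂ w hwA ζ, hf₃def]
          simp only [if_neg hwp]
      have hγ₂K : γ₂ ∈ KV :=
        ih γ₂ A' B' f₃ hA'p hB'p (by omega) hbij₃ hγ₃ (by omega)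
      have hfin : γ = τ₁⁻¹ * (τ₂⁻¹ * γ₂) := by
        rw [hγ₂def]
        group
      rw [hfin]
      exact mul_mem (inv_mem hτ₁K) (mul_mem (inv_mem hτ₂K) hγ₂K)

theorem vmap_mem {γ : Cantor ≃ₜ Cantor} (h : IsThompsonVMap γ) : γ ∈ KV := by
  obtain ⟨A, B, fmap, hA, hB, hc, hb, hγ⟩ := h
  exact vmap_mem_aux A.card γ A B fmap hA hB hc hb (fun w hw ζ => hγ w hw ζ) le_rfl

end VDecomposition

noncomputable section GrigTransitivity

def genFun4 : Fin 4 → (List Bool → List Bool) := ![Grig.aFun, Grig.bFun, Grig.cFun, Grig.dFun]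

def genLev4 (n : ℕ) : Fin 4 → Equiv.Perm (Fin n → Bool) :=
  ![Grig.aLev n, Grig.bLev n, Grig.cLev n, Grig.dLev n]

theorem ofFn_levelFun {n : ℕ} (f : List Bool → List Bool)
    (hlen : ∀ l, (f l).length = l.length) (v : Fin n → Bool) :
    List.ofFn (Grig.levelFun n f v) = f (List.ofFn v) := by
  apply List.ext_getElem
  · simp [hlen]
  · intro i h1 h2
    simp only [List.getElem_ofFn]
    simp [Grig.levelFun, List.getD_eq_getElem, h2]

theorem genLev4_ofFn (n : ℕ) (i : Fin 4) (v : Fin n → Bool) :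
    List.ofFn (genLev4 n i v) = genFun4 i (List.ofFn v) := by
  fin_cases i
  · exact ofFn_levelFun Grig.aFun Grig.aFun_length v
  · exact ofFn_levelFun Grig.bFun Grig.bFun_length v
  · exact ofFn_levelFun Grig.cFun Grig.cFun_length v
  · exact ofFn_levelFun Grig.dFun Grig.dFun_length v

def subst4 : Fin 4 → List (Fin 4) := ![[0,1,0], [3], [1], [2]]

def compFun4 : List (Fin 4) → List Bool → List Bool
  | [], w => w
  | i :: l, w => genFun4 i (compFun4 l w)

theorem compFun4_append (l₁ l₂ : List (Fin 4)) (w : List Bool) :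
    compFun4 (l₁ ++ l₂) w = compFun4 l₁ (compFun4 l₂ w) := by
  induction l₁ with
  | nil => rfl
  | cons i l ihl => simp [compFun4, ihl]

theorem subst4_sec (i : Fin 4) (w : List Bool) :
    compFun4 (subst4 i) (true :: w) = true :: genFun4 i w := by
  fin_cases i
  · show Grig.aFun (Grig.bFun (Grig.aFun (true :: w))) = true :: Grig.aFun w
    rw [show Grig.aFun (true :: w) = false :: w from rfl,
      show Grig.bFun (false :: w) = false :: Grig.aFun w from rfl]
    rfl
  · show Grig.dFun (true :: w) = true :: Grig.bFun w
    rfl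
  · show Grig.bFun (true :: w) = true :: Grig.cFun w
    rfl
  · show Grig.cFun (true :: w) = true :: Grig.dFun w
    rfl

theorem compFun4_flatMap (l : List (Fin 4)) (w : List Bool) :
    compFun4 (l.flatMap subst4) (true :: w) = true :: compFun4 l w := by
  induction l with
  | nil => rfl
  | cons i l ihl =>
    rw [List.flatMap_cons, compFun4_append, ihl, subst4_sec]
    rfl

def gword : ℕ → List (Fin 4)
  | 0 => [0]
  | k+1 => (gword k).flatMap subst4

theorem gword_spec (k : ℕ) :
    compFun4 (gword k) (List.replicate k true ++ [false]) = List.replicate (k+1) true := by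
  induction k with
  | zero => rfl
  | succ k ihk =>
    show compFun4 ((gword k).flatMap subst4) _ = _
    have h : List.replicate (k+1) true ++ [false] = true :: (List.replicate k true ++ [false]) := by
      rw [List.replicate_succ]; rfl
    rw [h, compFun4_flatMap, ihk, ← List.replicate_succ]

theorem prodLev_ofFn (n : ℕ) (l : List (Fin 4)) (v : Fin n → Bool) :
    List.ofFn (((l.map (genLev4 n)).prod) v) = compFun4 l (List.ofFn v) := by
  induction l with
  | nil => rfl
  | cons i l ihl =>
    rw [List.map_cons, List.prod_cons, Equiv.Perm.mul_apply, genLev4_ofFn, ihl]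
    rfl

theorem ofFn_etaL (n : ℕ) (hn : 1 ≤ n) :
    List.ofFn (TV.etaL n) = List.replicate (n-1) true ++ [false] := by
  apply List.ext_getElem
  · simp; omega
  · intro i h1 h2
    rw [List.getElem_ofFn]
    by_cases hi : i < n - 1
    · rw [List.getElem_append_left (by simpa using hi)]
      simp [TV.etaL, hi]
    · have hieq : i = n - 1 := by
        simp at h1; omega
      rw [List.getElem_append_right (by simpa using hi)]
      simp [TV.etaL, hi]

theorem ofFn_rhoL (n : ℕ) : List.ofFn (TV.rhoL n) = List.replicate n true := by
  apply List.ext_getElem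
  · simp
  · intro i h1 h2
    simp [TV.rhoL]

/-- The element of the level-`n` truncation of the Grigorchuk group moving `η_n` to `ρ_n`. -/
def grigP (n : ℕ) : Equiv.Perm (Fin n → Bool) := ((gword (n-1)).map (genLev4 n)).prod

theorem grigP_eta (n : ℕ) (hn : 1 ≤ n) : grigP n (TV.etaL n) = TV.rhoL n := by
  have h := prodLev_ofFn n (gword (n-1)) (TV.etaL n)
  rw [ofFn_etaL n hn, gword_spec (n-1)] at h
  have h2 : List.ofFn (grigP n (TV.etaL n)) = List.ofFn (TV.rhoL n) := by
    rw [ofFn_rhoL]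
    show List.ofFn (((gword (n-1)).map (genLev4 n)).prod (TV.etaL n)) = _
    rw [h]
    congr 1
    omega
  exact List.ofFn_injective h2

end GrigTransitivity

noncomputable section Bridge

open TV

theorem homeo_mul_apply' {X : Type*} [TopologicalSpace X] (f g : X ≃ₜ X) (x : X) :
    (f * g) x = f (g x) := rfl

theorem reshuffle_apply (n : ℕ) (ξ : Cantor) (x : XL n) (i : Fin 4) :
    reshuffle n (ξ, (x, i)) = ((ξ, i), x) := rfl

theorem reshuffle_symm_apply (n : ℕ) (ξ : Cantor) (x : XL n) (i : Fin 4) :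
    (reshuffle n).symm ((ξ, i), x) = (ξ, (x, i)) := rfl

theorem fiberedHomeo_apply {X Y : Type*} [TopologicalSpace X] [TopologicalSpace Y]
    [DiscreteTopology Y] (F : Y → X ≃ₜ X) (x : X) (y : Y) :
    fiberedHomeo F (x, y) = (F y x, y) := rfl

theorem liftRho_apply_rho (n : ℕ) (f : Cantor ≃ₜ Cantor) (ξ : Cantor) (i : Fin 4) :
    liftRho n f (ξ, (rhoL n, i)) =
      ((quadHomeo.symm (f (quadHomeo (ξ, i)))).1,
        (rhoL n, (quadHomeo.symm (f (quadHomeo (ξ, i)))).2)) := by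
  show (reshuffle n).symm
      ((fiberedHomeo fun x : XL n =>
        if x = rhoL n then quadHomeo.trans (f.trans quadHomeo.symm)
        else Homeomorph.refl (Cantor × Fin 4)) (reshuffle n (ξ, (rhoL n, i)))) = _
  rw [reshuffle_apply, fiberedHomeo_apply, if_pos rfl]
  show (reshuffle n).symm ((quadHomeo.symm (f (quadHomeo (ξ, i)))), rhoL n) = _
  rfl

theorem liftRho_apply_ne (n : ℕ) (f : Cantor ≃ₜ Cantor) (ξ : Cantor) {x : XL n} (i : Fin 4)
    (hx : x ≠ rhoL n) : liftRho n f (ξ, (x, i)) = (ξ, (x, i)) := by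
  show (reshuffle n).symm
      ((fiberedHomeo fun x : XL n =>
        if x = rhoL n then quadHomeo.trans (f.trans quadHomeo.symm)
        else Homeomorph.refl (Cantor × Fin 4)) (reshuffle n (ξ, (x, i)))) = _
  rw [reshuffle_apply, fiberedHomeo_apply, if_neg hx]
  rfl

theorem X0n_apply_rho (n : ℕ) (ξ : Cantor) (i : Fin 4) :
    X0n n (ξ, (rhoL n, i)) = ((X0D (ξ, i)).1, (rhoL n, (X0D (ξ, i)).2)) := by
  show (reshuffle n).symm
      ((fiberedHomeo fun x : XL n =>
        if x = rhoL n then X0D else Homeomorph.refl (Cantor × Fin 4))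
        (reshuffle n (ξ, (rhoL n, i)))) = _
  rw [reshuffle_apply, fiberedHomeo_apply, if_pos rfl]
  rfl

theorem X0n_apply_ne (n : ℕ) (ξ : Cantor) {x : XL n} (i : Fin 4) (hx : x ≠ rhoL n) :
    X0n n (ξ, (x, i)) = (ξ, (x, i)) := by
  show (reshuffle n).symm
      ((fiberedHomeo fun x : XL n =>
        if x = rhoL n then X0D else Homeomorph.refl (Cantor × Fin 4))
        (reshuffle n (ξ, (x, i)))) = _
  rw [reshuffle_apply, fiberedHomeo_apply, if_neg hx]
  rfl

theorem liftRho_mul (n : ℕ) (f g : Cantor ≃ₜ Cantor) :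
    liftRho n (f * g) = liftRho n f * liftRho n g := by
  apply Homeomorph.ext
  rintro ⟨ξ, x, i⟩
  by_cases hx : x = rhoL n
  · subst hx
    rw [homeo_mul_apply', liftRho_apply_rho, liftRho_apply_rho, liftRho_apply_rho]
    have key : quadHomeo ((quadHomeo.symm (g (quadHomeo (ξ, i)))).1,
        (quadHomeo.symm (g (quadHomeo (ξ, i)))).2) = g (quadHomeo (ξ, i)) := by
      rw [Prod.mk.eta, Homeomorph.apply_symm_apply]
    rw [key]
    rfl
  · rw [homeo_mul_apply', liftRho_apply_ne n _ _ _ hx, liftRho_apply_ne n _ _ _ hx,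
      liftRho_apply_ne n _ _ _ hx]

/-- `liftRho` as a homomorphism. -/
def PhiHom (n : ℕ) : (Cantor ≃ₜ Cantor) →* (Mn n ≃ₜ Mn n) :=
  MonoidHom.mk' (liftRho n) (liftRho_mul n)

theorem liftRho_Ael (n : ℕ) : liftRho n Ael = X0n n := by
  apply Homeomorph.ext
  rintro ⟨ξ, x, i⟩
  by_cases hx : x = rhoL n
  · subst hx
    rw [liftRho_apply_rho, X0n_apply_rho]
    have key : quadHomeo.symm (Ael (quadHomeo (ξ, i))) = X0D (ξ, i) := by
      show quadHomeo.symm (quadHomeo (X0D (quadHomeo.symm (quadHomeo (ξ, i))))) = _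
      rw [Homeomorph.symm_apply_apply, Homeomorph.symm_apply_apply]
    rw [key]
  · rw [liftRho_apply_ne n _ _ _ hx, X0n_apply_ne n _ _ hx]

theorem type1Gen_apply (n : ℕ) (s : Equiv.Perm (XL n)) (ξ : Cantor) (x : XL n) (i : Fin 4) :
    type1Gen n s (ξ, (x, i)) = (ξ, (s x, i)) := rfl

theorem type1Gen_inv_apply (n : ℕ) (s : Equiv.Perm (XL n)) (ξ : Cantor) (x : XL n) (i : Fin 4) :
    (type1Gen n s)⁻¹ (ξ, (x, i)) = (ξ, (s⁻¹ x, i)) := rfl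

theorem type2Gen_apply (n : ℕ) (π : Equiv.Perm (Fin 4)) (ξ : Cantor) (x : XL n) (i : Fin 4) :
    type2Gen n π (ξ, (x, i)) = (ξ, (x, if x = etaL n then π i else i)) := by
  show (ξ, (x, (if x = etaL n then π else Equiv.refl (Fin 4)) i)) = _
  by_cases hx : x = etaL n
  · rw [if_pos hx, if_pos hx]
  · rw [if_neg hx, if_neg hx]
    rfl

theorem liftRho_Pq (n : ℕ) (hn : 1 ≤ n) (σ : Equiv.Perm (Fin 4)) :
    liftRho n (Pq σ) =
      type1Gen n (grigP n) * type2Gen n σ * (type1Gen n (grigP n))⁻¹ := by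
  apply Homeomorph.ext
  rintro ⟨ξ, x, i⟩
  rw [homeo_mul_apply', homeo_mul_apply', type1Gen_inv_apply, type2Gen_apply,
    type1Gen_apply]
  rw [show ∀ (e : Equiv.Perm (XL n)) y, e (e⁻¹ y) = y from fun e y => e.apply_symm_apply y]
  by_cases hx : x = rhoL n
  · subst hx
    rw [liftRho_apply_rho]
    have key : quadHomeo.symm (Pq σ (quadHomeo (ξ, i))) = (ξ, σ i) := by
      show quadHomeo.symm (quadHomeo ((basePermHomeo σ)
        (quadHomeo.symm (quadHomeo (ξ, i))))) = _
      rw [Homeomorph.symm_apply_apply, Homeomorph.symm_apply_apply, basePermHomeo_pair]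
    rw [key]
    have heta : (grigP n)⁻¹ (rhoL n) = etaL n := by
      rw [← grigP_eta n hn, show ∀ (e : Equiv.Perm (XL n)) y, e⁻¹ (e y) = y from fun e y => e.symm_apply_apply y]
    rw [if_pos heta]
  · rw [liftRho_apply_ne n _ _ _ hx]
    have hne : (grigP n)⁻¹ x ≠ etaL n := by
      intro he
      apply hx
      have : x = grigP n (etaL n) := by rw [← he, show ∀ (e : Equiv.Perm (XL n)) y, e (e⁻¹ y) = y from fun e y => e.apply_symm_apply y]
      rw [this, grigP_eta n hn]
    rw [if_neg hne]

theorem type1Gen_mul (n : ℕ) (s t : Equiv.Perm (XL n)) :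
    type1Gen n (s * t) = type1Gen n s * type1Gen n t :=
  Homeomorph.ext fun p => rfl

theorem type1Gen_one (n : ℕ) : type1Gen n 1 = 1 :=
  Homeomorph.ext fun p => rfl

theorem type1_prod_mem (n : ℕ) (l : List (Fin 4)) :
    type1Gen n ((l.map (genLev4 n)).prod) ∈ Wn n := by
  induction l with
  | nil =>
    rw [List.map_nil, List.prod_nil, type1Gen_one]
    exact one_mem _
  | cons i l ihl =>
    rw [List.map_cons, List.prod_cons, type1Gen_mul]
    refine mul_mem ?_ ihl
    apply Subgroup.subset_closure
    fin_cases i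
    · exact Or.inl (Or.inl (Or.inl (Or.inl rfl)))
    · exact Or.inl (Or.inl (Or.inl (Or.inr (Or.inl rfl))))
    · exact Or.inl (Or.inl (Or.inl (Or.inr (Or.inr (Or.inl rfl)))))
    · exact Or.inl (Or.inl (Or.inl (Or.inr (Or.inr (Or.inr rfl)))))

theorem liftRho_Pq_mem (n : ℕ) (hn : 1 ≤ n) (σ : Equiv.Perm (Fin 4)) :
    liftRho n (Pq σ) ∈ Wn n := by
  rw [liftRho_Pq n hn σ]
  have h1 : type1Gen n (grigP n) ∈ Wn n := type1_prod_mem n (gword (n-1))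
  have h2 : type2Gen n σ ∈ Wn n :=
    Subgroup.subset_closure (Or.inl (Or.inl (Or.inr ⟨σ, rfl⟩)))
  exact mul_mem (mul_mem h1 h2) (inv_mem h1)

theorem liftRho_Ael_mem (n : ℕ) : liftRho n Ael ∈ Wn n := by
  rw [liftRho_Ael]
  exact Subgroup.subset_closure (Or.inr (Or.inl rfl))

end Bridge

theorem KV_le_comap (n : ℕ) (hn : 1 ≤ n) :
    KV ≤ Subgroup.comap (PhiHom n) (TV.Wn n) := by
  rw [KV, Subgroup.closure_le]
  rintro γ (⟨σ, rfl⟩ | hγ)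
  · exact liftRho_Pq_mem n hn σ
  · rw [Set.mem_singleton_iff] at hγ
    subst hγ
    exact liftRho_Ael_mem n

/-- **The copy of Thompson's group `V` over `ρ_n` lies in `W_n`:** for every `n ≥ 1`,
the group `W_n = ⟨T_n⟩` contains the copy
`RiSt_V(C_{(ρ_n,1)} ∪ C_{(ρ_n,2)} ∪ C_{(ρ_n,3)} ∪ C_{(ρ_n,4)})` of Thompson's group `V`
supported on the union of the four sheets over `ρ_n`, i.e. the image of `V` under the
embedding given by the identification of this union with the Cantor set. -/
theorem ristV_le_Wn (n : ℕ) (hn : 1 ≤ n) (f : Cantor ≃ₜ Cantor) (hf : f ∈ ThompsonV) :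
    TV.liftRho n f ∈ TV.Wn n := by
  have hV : ThompsonV ≤ Subgroup.comap (PhiHom n) (TV.Wn n) := by
    rw [ThompsonV, Subgroup.closure_le]
    intro γ hγ
    exact KV_le_comap n hn (vmap_mem hγ)
  exact Subgroup.mem_comap.1 (hV hf)
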